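/- arXiv:2510.18379 — 9 statements merged into one kernel-verified Lean document; each statement's English description precedes it below -/
import Mathlib

section
/- There exists an absolute constant c > 0 such that the following holds. Let m = 2ℓ − 1 ≥ 1 be an odd integer, let α ∈ [−1/2, 1/2], and let X ~ Binomial(m, 1/2 + α). Define β := P(X ≥ ℓ) − 1/2. Then |β| ≥ c · min(√m · |α|, 1). Moreover, if α = 0 then β = 0. -/
set_option maxHeartbeats 1000000

open Finset

/-- `P(X ≥ ℓ)` for `X ~ Binomial(m, q)`. -/
noncomputable def binomialTail (m ℓ : ℕ) (q : ℝ) : ℝ :=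
  ∑ x ∈ Finset.Icc ℓ m, (m.choose x : ℝ) * q ^ x * (1 - q) ^ (m - x)

lemma cb_sq (k : ℕ) (hk : 1 ≤ k) : 16 ^ k ≤ 4 * k * (Nat.centralBinom k)^2 := by
  induction k with
  | zero => omega
  | succ n ih =>
    rcases Nat.eq_zero_or_pos n with h0 | h1
    · subst h0; decide
    · have ih' := ih h1
      have key := Nat.succ_mul_centralBinom_succ n
      refine Nat.le_of_mul_le_mul_left ?_ (show 0 < n+1 by omega)
      calc (n+1) * 16^(n+1) = 16*(n+1)*16^n := by ring
        _ ≤ 16*(n+1)*(4*n*(Nat.centralBinom n)^2) := Nat.mul_le_mul_left _ ih'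
        _ ≤ 4*(2*(2*n+1)*Nat.centralBinom n)^2 := by nlinarith [Nat.centralBinom_pos n]
        _ = 4*((n+1)*Nat.centralBinom (n+1))^2 := by rw [key]
        _ = (n+1) * (4 * (n+1) * (Nat.centralBinom (n+1))^2) := by ring

lemma cb_sq' (k : ℕ) : 4 * 16 ^ k ≤ 16 * (2*k+1) * ((2*k).choose k)^2 := by
  rcases Nat.eq_zero_or_pos k with h0 | h1
  · subst h0; decide
  · have h := cb_sq k h1
    have hc : Nat.centralBinom k = (2*k).choose k := rfl
    rw [hc] at h
    nlinarith [Nat.choose_pos (show k ≤ 2*k by omega)]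

lemma tail_eq (k : ℕ) (q : ℝ) :
    binomialTail (2*k+1) (k+1) q
      = ∑ j ∈ range (k+1), ((2*k+1).choose (k+1+j) : ℝ) * q^(k+1+j) * (1-q)^(k-j) := by
  rw [binomialTail, ← Finset.Ico_add_one_right_eq_Icc, Finset.sum_Ico_eq_sum_range]
  have h : 2*k+1+1 - (k+1) = k+1 := by omega
  rw [h]
  refine Finset.sum_congr rfl fun j hj => ?_
  simp only [mem_range] at hj
  have h1 : 2*k+1 - (k+1+j) = k - j := by omega
  rw [h1]

lemma tail_hasDeriv (k : ℕ) (p : ℝ) :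
    HasDerivAt (binomialTail (2*k+1) (k+1))
      ((2*k+1) * ((2*k).choose k) * (p*(1-p))^k) p := by
  have hfun : (binomialTail (2*k+1) (k+1))
      = fun q => ∑ j ∈ range (k+1), ((2*k+1).choose (k+1+j) : ℝ) * q^(k+1+j) * (1-q)^(k-j) := by
    funext q; exact tail_eq k q
  rw [hfun]
  set A : ℕ → ℝ := fun j => (2*k+1 : ℝ) * ((2*k).choose (k+j)) * (p^(k+j) * (1-p)^(k-j)) with hA
  have hterm : ∀ j ∈ range (k+1),
      HasDerivAt (fun q : ℝ => ((2*k+1).choose (k+1+j) : ℝ) * q^(k+1+j) * (1-q)^(k-j))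
        (A j - A (j+1)) p := by
    intro j hj
    simp only [mem_range] at hj
    have hjk : j ≤ k := by omega
    have hp : HasDerivAt (fun q : ℝ => q^(k+1+j)) ((k+1+j : ℕ) * p^(k+j)) p := by
      have e : k+1+j-1 = k+j := by omega
      have := hasDerivAt_pow (k+1+j) p
      rwa [e] at this
    have hq : HasDerivAt (fun q : ℝ => (1-q)^(k-j)) (-((k-j : ℕ) * (1-p)^(k-j-1))) p := by
      have h1 : HasDerivAt (fun q : ℝ => 1 - q) (-1) p := by
        simpa using ((hasDerivAt_id' p).const_sub (1:ℝ))
      have := h1.fun_pow (k-j)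
      exact this.congr_deriv (by ring)
    have hprod := (hp.fun_mul hq).const_mul ((2*k+1).choose (k+1+j) : ℝ)
    have hshape : (fun q : ℝ => ((2*k+1).choose (k+1+j) : ℝ) * (q^(k+1+j) * (1-q)^(k-j)))
        = (fun q : ℝ => ((2*k+1).choose (k+1+j) : ℝ) * q^(k+1+j) * (1-q)^(k-j)) := by
      funext q; ring
    rw [hshape] at hprod
    refine hprod.congr_deriv (Eq.symm ?_)
    -- nat identities
    have e1n : (2*k+1).choose (k+1+j) * (k+1+j) = (2*k+1) * (2*k).choose (k+j) := by
      have h := Nat.add_one_mul_choose_eq (2*k) (k+j)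
      rw [show k+j+1 = k+1+j from by omega] at h
      rw [← h]
    have e2n : (2*k+1).choose (k+1+j) * (k-j) = (2*k+1) * (2*k).choose (k+1+j) := by
      have h := Nat.choose_mul_succ_eq (2*k) (k+1+j)
      rw [show 2*k+1 - (k+1+j) = k - j from by omega] at h
      rw [← h]; ring
    have e1 : ((2*k+1).choose (k+1+j) : ℝ) * ((k+1+j : ℕ) : ℝ)
        = ((2*k+1 : ℕ) : ℝ) * ((2*k).choose (k+j) : ℝ) := by exact_mod_cast congrArg (Nat.cast (R := ℝ)) e1n
    have e2 : ((2*k+1).choose (k+1+j) : ℝ) * ((k-j : ℕ) : ℝ)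
        = ((2*k+1 : ℕ) : ℝ) * ((2*k).choose (k+1+j) : ℝ) := by exact_mod_cast congrArg (Nat.cast (R := ℝ)) e2n
    have h3 : k + (j+1) = k+1+j := by omega
    have h4 : k - (j+1) = k - j - 1 := by omega
    rw [hA]; simp only [h3, h4]
    have hcast : ((2*k+1 : ℕ) : ℝ) = 2*(k:ℝ)+1 := by push_cast; ring
    rw [hcast] at e1 e2
    linear_combination (p^(k+1+j) * (1-p)^(k-j-1)) * e2 - (p^(k+j) * (1-p)^(k-j)) * e1
  have hsum := HasDerivAt.fun_sum hterm
  have htel : ∑ j ∈ range (k+1), (A j - A (j+1)) = A 0 - A (k+1) := Finset.sum_range_sub' A (k+1)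
  rw [htel] at hsum
  have hA0 : A 0 - A (k+1) = (2*k+1) * ((2*k).choose k) * (p*(1-p))^k := by
    have hz : (2*k).choose (k+(k+1)) = 0 := Nat.choose_eq_zero_of_lt (by omega)
    simp only [hA, hz, Nat.add_zero, Nat.sub_zero, Nat.cast_zero]
    rw [mul_pow]
    ring
  rwa [hA0] at hsum

lemma tail_compl (k : ℕ) (p : ℝ) :
    binomialTail (2*k+1) (k+1) p + binomialTail (2*k+1) (k+1) (1-p) = 1 := by
  have hfull : ∑ x ∈ range (2*k+2), ((2*k+1).choose x : ℝ) * p^x * (1-p)^(2*k+1-x) = 1 := by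
    have h := add_pow p (1-p) (2*k+1)
    rw [show p + (1-p) = (1:ℝ) from by ring, one_pow] at h
    rw [show 2*k+1+1 = 2*k+2 from rfl] at h
    have h2 : ∑ x ∈ range (2*k+2), ((2*k+1).choose x : ℝ) * p^x * (1-p)^(2*k+1-x)
        = ∑ x ∈ range (2*k+2), p^x * (1-p)^(2*k+1-x) * ((2*k+1).choose x : ℝ) :=
      Finset.sum_congr rfl fun x hx => by ring
    rw [h2, ← h]
  -- split the full sum
  have hsplit : ∑ x ∈ range (2*k+2), ((2*k+1).choose x : ℝ) * p^x * (1-p)^(2*k+1-x)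
      = (∑ x ∈ range (k+1), ((2*k+1).choose x : ℝ) * p^x * (1-p)^(2*k+1-x))
        + ∑ x ∈ Ico (k+1) (2*k+2), ((2*k+1).choose x : ℝ) * p^x * (1-p)^(2*k+1-x) := by
    rw [Finset.range_eq_Ico, ← Finset.sum_Ico_consecutive _ (by omega : 0 ≤ k+1) (by omega : k+1 ≤ 2*k+2), Finset.range_eq_Ico]
  -- the upper part is binomialTail at p
  have hupper : binomialTail (2*k+1) (k+1) p
      = ∑ x ∈ Ico (k+1) (2*k+2), ((2*k+1).choose x : ℝ) * p^x * (1-p)^(2*k+1-x) := by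
    rw [binomialTail, ← Finset.Ico_add_one_right_eq_Icc, show 2*k+1+1 = 2*k+2 from rfl]
  -- the lower part is binomialTail at 1-p, via reflection
  have hlower : binomialTail (2*k+1) (k+1) (1-p)
      = ∑ x ∈ range (k+1), ((2*k+1).choose x : ℝ) * p^x * (1-p)^(2*k+1-x) := by
    rw [binomialTail, ← Finset.Ico_add_one_right_eq_Icc, Finset.sum_Ico_eq_sum_range]
    rw [show 2*k+1+1 - (k+1) = k+1 from by omega]
    rw [← Finset.sum_range_reflect]
    refine Finset.sum_congr rfl fun j hj => ?_
    simp only [mem_range] at hj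
    have hjk : j ≤ k := by omega
    have h1 : k+1-1-j = k-j := by omega
    rw [h1]
    have h2 : k+1+(k-j) = 2*k+1-j := by omega
    rw [h2]
    have h3 : 2*k+1 - (2*k+1-j) = j := by omega
    rw [h3]
    have h4 : (2*k+1).choose (2*k+1-j) = (2*k+1).choose j := by
      rw [Nat.choose_symm (by omega : j ≤ 2*k+1)]
    rw [h4]
    have h5 : (1 : ℝ) - (1-p) = p := by ring
    rw [h5]
    ring
  rw [hupper, hlower]
  rw [hsplit] at hfull
  linarith [hfull]

lemma le_of_sq_le_sq' {a b : ℝ} (ha : 0 ≤ a) (hb : 0 ≤ b) (h : a^2 ≤ b^2) : a ≤ b := by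
  nlinarith

lemma key (k : ℕ) (α : ℝ) (h0 : 0 ≤ α) (h1 : α ≤ 1/2) :
    (1/8) * min (Real.sqrt ((2*k+1 : ℕ) : ℝ) * α) 1
      ≤ binomialTail (2*k+1) (k+1) (1/2 + α) - 1/2 := by
  set f := binomialTail (2*k+1) (k+1) with hf
  set C : ℝ := (((2*k).choose k : ℕ) : ℝ) with hC
  set D : ℝ → ℝ := fun p => ((2*k+1 : ℕ) : ℝ) * C * (p*(1-p))^k with hD
  have hCpos : (0:ℝ) < C := by
    rw [hC]; exact_mod_cast Nat.choose_pos (show k ≤ 2*k by omega)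
  have hderiv : ∀ p : ℝ, HasDerivAt f (D p) p := fun p => by
    have h := tail_hasDeriv k p
    have he : D p = (2*(k:ℝ)+1) * (((2*k).choose k : ℕ) : ℝ) * (p*(1-p))^k := by
      show ((2*k+1:ℕ):ℝ) * C * (p*(1-p))^k = _
      rw [hC]; push_cast; ring
    rw [he]; exact h
  have hdiff : Differentiable ℝ f := fun p => (hderiv p).differentiableAt
  have hderiv' : ∀ p : ℝ, deriv f p = D p := fun p => (hderiv p).deriv
  have hmcast : (((2*k+1 : ℕ)) : ℝ) = 2*(k:ℝ)+1 := by push_cast; ring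
  set M : ℝ := Real.sqrt ((2*k+1 : ℕ) : ℝ) with hM
  have hm1 : (1:ℝ) ≤ ((2*k+1 : ℕ) : ℝ) := by exact_mod_cast Nat.one_le_iff_ne_zero.mpr (by omega)
  have hM1 : 1 ≤ M := by
    rw [hM, show (1:ℝ) = Real.sqrt 1 from (Real.sqrt_one).symm]
    exact Real.sqrt_le_sqrt hm1
  have hM0 : (0:ℝ) < M := by linarith
  have hMsq : M^2 = ((2*k+1 : ℕ) : ℝ) := Real.sq_sqrt (by linarith)
  set α' := min α (1/(2*M)) with hα'
  have hα'0 : 0 ≤ α' := le_min h0 (by positivity)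
  have hα'α : α' ≤ α := min_le_left _ _
  have hα'M : α' ≤ 1/(2*M) := min_le_right _ _
  have hα'h : α' ≤ 1/2 := le_trans hα'M (by
    rw [div_le_div_iff₀ (by linarith) (by norm_num)]; linarith)
  -- derivative lower bound on [1/2, 1/2+α']
  have hDlow : ∀ t ∈ Set.Icc (1/2 : ℝ) (1/2 + α'), M/4 ≤ D t := by
    intro t ht
    obtain ⟨ht1, ht2⟩ := ht
    have hmpos : (0:ℝ) < ((2*k+1 : ℕ) : ℝ) := by linarith
    have hs2 : (t - 1/2)^2 ≤ 1/(4*((2*k+1 : ℕ) : ℝ)) := by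
      have ha1 : t - 1/2 ≤ 1/(2*M) := by linarith [hα'M]
      have ha2 : 0 ≤ t - 1/2 := by linarith
      have ha3 := mul_self_le_mul_self ha2 ha1
      calc (t-1/2)^2 = (t-1/2)*(t-1/2) := by ring
        _ ≤ (1/(2*M))*(1/(2*M)) := ha3
        _ = 1/(4*M^2) := by ring
        _ = 1/(4*((2*k+1:ℕ):ℝ)) := by rw [hMsq]
    have htt : 1/4 - 1/(4*((2*k+1:ℕ):ℝ)) ≤ t*(1-t) := by
      have he : t*(1-t) = 1/4 - (t-1/2)^2 := by ring
      rw [he]; linarith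
    have httnn : (0:ℝ) ≤ 1/4 - 1/(4*((2*k+1:ℕ):ℝ)) := by
      rw [sub_nonneg, div_le_div_iff₀ (by linarith) (by norm_num)]; linarith
    have hpow : (1/4 - 1/(4*((2*k+1:ℕ):ℝ)))^k ≤ (t*(1-t))^k :=
      pow_le_pow_left₀ httnn htt k
    -- Bernoulli
    have hbern : (1/4:ℝ)^k * (1/2) ≤ (1/4 - 1/(4*((2*k+1:ℕ):ℝ)))^k := by
      have hfac : (1/4 - 1/(4*((2*k+1:ℕ):ℝ))) = (1/4) * (1 + (-(1/((2*k+1:ℕ):ℝ)))) := by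
        field_simp
        ring
      rw [hfac, mul_pow]
      have hb := one_add_mul_le_pow (a := -(1/((2*k+1:ℕ):ℝ))) (by
        have : 1/((2*k+1:ℕ):ℝ) ≤ 1 := by rw [div_le_one hmpos]; linarith
        linarith) k
      have hkm : (1/2:ℝ) ≤ 1 + (k:ℝ) * (-(1/((2*k+1:ℕ):ℝ))) := by
        rw [hmcast]
        have hk0 : (0:ℝ) ≤ (k:ℝ) := Nat.cast_nonneg k
        have hmm : (k:ℝ) * (1/(2*(k:ℝ)+1)) ≤ 1/2 := by
          rw [mul_one_div, div_le_div_iff₀ (by linarith) (by norm_num)]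
          linarith
        linarith
      have h14 : (0:ℝ) ≤ (1/4:ℝ)^k := by positivity
      calc (1/4:ℝ)^k * (1/2) ≤ (1/4:ℝ)^k * (1 + (k:ℝ)*(-(1/((2*k+1:ℕ):ℝ)))) := by nlinarith
        _ ≤ (1/4:ℝ)^k * (1 + (-(1/((2*k+1:ℕ):ℝ))))^k := by nlinarith [hb]
    -- sqrt bound : M/4 ≤ (2k+1) * C * (1/4)^k * (1/2)
    have hQ : (0:ℝ) < 4^k := by positivity
    have h16 : (16:ℝ)^k = (4^k)^2 := by
      rw [← pow_mul, show k*2 = 2*k by ring, pow_mul]; norm_num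
    have hcbr : (4:ℝ) * 16^k ≤ 16 * (2*(k:ℝ)+1) * C^2 := by
      have hcb := (Nat.cast_le (α := ℝ)).mpr (cb_sq' k)
      push_cast at hcb
      convert hcb using 1 <;> rw [hC] <;> push_cast <;> ring
    have hgoal2 : (M*(2*4^k))^2 ≤ (((2*k+1:ℕ):ℝ)*C*4)^2 := by
      have e1 : (M*(2*4^k))^2 = (2*(k:ℝ)+1) * (4 * 16^k) := by
        rw [mul_pow, hMsq, hmcast, h16]; ring
      have e2 : (((2*k+1:ℕ):ℝ)*C*4)^2 = (2*(k:ℝ)+1) * (16*(2*(k:ℝ)+1)*C^2) := by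
        rw [hmcast]; ring
      rw [e1, e2]
      exact mul_le_mul_of_nonneg_left hcbr (by positivity)
    have hmain : M*(2*4^k) ≤ ((2*k+1:ℕ):ℝ)*C*4 :=
      le_of_sq_le_sq' (by positivity) (by positivity) hgoal2
    have hsq : M/4 ≤ ((2*k+1:ℕ):ℝ) * C * ((1/4:ℝ)^k * (1/2)) := by
      have expand : ((2*k+1:ℕ):ℝ) * C * ((1/4:ℝ)^k * (1/2))
          = (((2*k+1:ℕ):ℝ)*C*4) / (4*(2*4^k)) := by
        rw [div_pow, one_pow]; field_simp
      rw [expand, le_div_iff₀ (by positivity)]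
      calc M/4 * (4*(2*4^k)) = M*(2*4^k) := by ring
        _ ≤ ((2*k+1:ℕ):ℝ)*C*4 := hmain
    -- combine
    have hDge : ((2*k+1:ℕ):ℝ) * C * ((1/4:ℝ)^k * (1/2)) ≤ D t := by
      have hDt : D t = ((2*k+1:ℕ):ℝ) * C * (t*(1-t))^k := rfl
      rw [hDt]
      have hcomb : (1/4:ℝ)^k * (1/2) ≤ (t*(1-t))^k := le_trans hbern hpow
      have h2 : (0:ℝ) ≤ ((2*k+1:ℕ):ℝ) * C := by positivity
      exact mul_le_mul_of_nonneg_left hcomb h2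
    linarith
  -- MVT on [1/2, 1/2+α']
  have hIcc : (1/2 : ℝ) ≤ 1/2 + α' := by linarith
  have hconv := (convex_Icc (1/2:ℝ) (1/2+α')).mul_sub_le_image_sub_of_le_deriv
      hdiff.continuous.continuousOn hdiff.differentiableOn
      (fun x hx => by
        rw [hderiv' x]
        exact hDlow x (interior_subset hx))
      (1/2) (Set.left_mem_Icc.mpr hIcc) (1/2+α') (Set.right_mem_Icc.mpr hIcc) (by linarith)
  -- monotonicity on [1/2+α', 1/2+α]
  have hIcc2 : (1/2 + α' : ℝ) ≤ 1/2 + α := by linarith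
  have hmono := (convex_Icc (1/2+α':ℝ) (1/2+α)).mul_sub_le_image_sub_of_le_deriv
      hdiff.continuous.continuousOn hdiff.differentiableOn
      (C := 0)
      (fun x hx => by
        rw [hderiv' x]
        have hDx : D x = ((2*k+1:ℕ):ℝ) * C * (x*(1-x))^k := rfl
        rw [hDx]
        have hx' := interior_subset hx
        obtain ⟨hx1, hx2⟩ := hx'
        have hxx : (0:ℝ) ≤ x*(1-x) := mul_nonneg (by linarith) (by linarith)
        exact mul_nonneg (by positivity) (pow_nonneg hxx k))
      (1/2+α') (Set.left_mem_Icc.mpr hIcc2) (1/2+α) (Set.right_mem_Icc.mpr hIcc2) (by linarith)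
  have hf12 : f (1/2) = 1/2 := by
    have hcomp := tail_compl k (1/2)
    rw [show (1:ℝ) - 1/2 = 1/2 by norm_num] at hcomp
    rw [← hf] at hcomp
    linarith
  have hβ : M/4 * α' ≤ f (1/2+α) - 1/2 := by
    have e1 : M/4 * ((1/2+α') - 1/2) = M/4 * α' := by ring
    rw [e1] at hconv
    rw [hf12] at hconv
    linarith [hconv, hmono]
  rcases le_total (M*α) (1/2) with hc | hc
  · rw [min_eq_left (le_trans hc (by norm_num))]
    have hα2 : α ≤ 1/(2*M) := by
      rw [le_div_iff₀ (by positivity)]; linarith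
    have hαα' : α' = α := min_eq_left hα2
    rw [hαα'] at hβ
    nlinarith [hβ, hM0, mul_nonneg hM0.le h0]
  · have h1 : 1/(2*M) ≤ α := by
      rw [div_le_iff₀ (by positivity)]; linarith
    have hαα' : α' = 1/(2*M) := min_eq_right h1
    have he : M/4 * α' = 1/8 := by
      rw [hαα']; field_simp; ring
    have hmin1 : min (M*α) 1 ≤ 1 := min_le_right _ _
    linarith [hβ, he, hmin1]


/-- There is an absolute constant `c > 0` such that for every odd `m = 2ℓ - 1 ≥ 1` and
`α ∈ [-1/2, 1/2]`, letting `X ~ Binomial(m, 1/2 + α)` and `β := P(X ≥ ℓ) - 1/2`, we have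
`|β| ≥ c * min (√m * |α|) 1`; moreover if `α = 0` then `β = 0`. -/
theorem from_many_bits_one :
    ∃ c : ℝ, 0 < c ∧
      ∀ (ℓ m : ℕ) (α : ℝ), 1 ≤ ℓ → m = 2 * ℓ - 1 →
        α ∈ Set.Icc (-(1 : ℝ) / 2) (1 / 2) →
        (|binomialTail m ℓ (1 / 2 + α) - 1 / 2| ≥ c * min (Real.sqrt m * |α|) 1) ∧
        (α = 0 → binomialTail m ℓ (1 / 2 + α) - 1 / 2 = 0) := by
  refine ⟨1/8, by norm_num, ?_⟩
  intro ℓ m α hℓ hm hα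
  obtain ⟨k, rfl⟩ : ∃ k, ℓ = k+1 := ⟨ℓ-1, by omega⟩
  have hm2 : m = 2*k+1 := by omega
  subst hm2
  obtain ⟨hα1, hα2⟩ := hα
  constructor
  · rcases le_or_gt 0 α with hpos | hneg
    · have hk := key k α hpos hα2
      rw [abs_of_nonneg hpos]
      exact le_trans hk (le_abs_self _)
    · have hk := key k (-α) (by linarith) (by linarith)
      rw [abs_of_neg hneg]
      have hcomp := tail_compl k (1/2 + -α)
      rw [show (1:ℝ) - (1/2 + -α) = 1/2 + α from by ring] at hcomp
      have hbeq : binomialTail (2*k+1) (k+1) (1/2+α) - 1/2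
          = -(binomialTail (2*k+1) (k+1) (1/2 + -α) - 1/2) := by linarith
      rw [hbeq, abs_neg]
      exact le_trans hk (le_abs_self _)
  · intro h; subst h
    have hcomp := tail_compl k (1/2)
    rw [show (1:ℝ) - 1/2 = 1/2 from by norm_num] at hcomp
    rw [show (1/2 + 0 : ℝ) = 1/2 from by ring]
    linarith
end

section
/- Let m = 2ℓ − 1 ≥ 1 be an odd integer, let α ∈ [2/√m, 1/2], and let X ~ Binomial(m, 1/2 + α). Then P(X < ℓ) ≤ 1/(1 + m·α²); in particular P(X ≥ ℓ) ≥ 4/5. -/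
open Finset

/-- `P(X < ℓ)` for `X ~ Binomial(m, q)`. -/
noncomputable def binomialLow (m ℓ : ℕ) (q : ℝ) : ℝ :=
  ∑ x ∈ Finset.range ℓ, (m.choose x : ℝ) * q ^ x * (1 - q) ^ (m - x)

set_option maxHeartbeats 800000 in
/-- For odd `m = 2ℓ - 1 ≥ 1`, `α ∈ [2/√m, 1/2]` and `X ~ Binomial(m, 1/2 + α)`:
`P(X < ℓ) ≤ 1/(1 + m α²)`, and in particular `P(X ≥ ℓ) ≥ 4/5`. -/
theorem binomial_large_bias (ℓ m : ℕ) (α : ℝ) (hℓ : 1 ≤ ℓ) (hm : m = 2 * ℓ - 1)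
    (hα : α ∈ Set.Icc (2 / Real.sqrt m) (1 / 2)) :
    binomialLow m ℓ (1 / 2 + α) ≤ 1 / (1 + m * α ^ 2) ∧
    binomialTail m ℓ (1 / 2 + α) ≥ 4 / 5 := by
  obtain ⟨k, rfl⟩ : ∃ k, ℓ = k + 1 := ⟨ℓ - 1, by omega⟩
  have hm' : m = 2 * k + 1 := by omega
  subst hm'
  obtain ⟨hαl, hαu⟩ := hα
  set M : ℝ := ((2 * k + 1 : ℕ) : ℝ) with hMdef
  have hM : M = 2 * (k : ℝ) + 1 := by rw [hMdef]; push_cast; ring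
  have hMpos : 0 < M := by rw [hM]; positivity
  have hs0 : (0:ℝ) < Real.sqrt M := Real.sqrt_pos.mpr hMpos
  have hα0 : 0 < α := lt_of_lt_of_le (by positivity) hαl
  have hαu' : α ≤ 1 / 2 := hαu
  have hs4 : (4:ℝ) ≤ Real.sqrt M := by
    have h : 2 / Real.sqrt M ≤ 1 / 2 := hαl.trans hαu
    rw [div_le_div_iff₀ hs0 (by norm_num)] at h
    linarith
  have hsq : Real.sqrt M ^ 2 = M := Real.sq_sqrt hMpos.le
  have hM16 : (16:ℝ) ≤ M := by nlinarith
  have hk1 : (1:ℝ) ≤ (k:ℝ) := by rw [hM] at hM16; linarith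
  have hA4 : 4 ≤ M * α ^ 2 := by
    have h2 : (2 / Real.sqrt M) ^ 2 ≤ α ^ 2 :=
      pow_le_pow_left₀ (by positivity) hαl 2
    rw [div_pow, hsq] at h2
    rw [div_le_iff₀ hMpos] at h2
    nlinarith
  set q : ℝ := 1 / 2 + α with hq
  have hq0 : (0:ℝ) ≤ q := by rw [hq]; linarith
  have hp0 : (0:ℝ) ≤ 1 - q := by rw [hq]; linarith
  have hpq : 1 - q ≤ q := by rw [hq]; linarith
  have hsum1 : ∑ x ∈ Finset.range (2 * k + 1 + 1),
      ((2 * k + 1).choose x : ℝ) * q ^ x * (1 - q) ^ (2 * k + 1 - x) = 1 := by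
    have h := add_pow q (1 - q) (2 * k + 1)
    have h1 : q + (1 - q) = 1 := by ring
    rw [h1, one_pow] at h
    calc ∑ x ∈ Finset.range (2 * k + 1 + 1),
          ((2 * k + 1).choose x : ℝ) * q ^ x * (1 - q) ^ (2 * k + 1 - x)
        = ∑ x ∈ Finset.range (2 * k + 1 + 1),
          q ^ x * (1 - q) ^ (2 * k + 1 - x) * ((2 * k + 1).choose x : ℝ) :=
          Finset.sum_congr rfl fun x _ => by ring
      _ = 1 := h.symm
  have hsplit : binomialLow (2*k+1) (k+1) q + binomialTail (2*k+1) (k+1) q = 1 := by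
    rw [binomialLow, binomialTail, ← Finset.Ico_add_one_right_eq_Icc (k+1) (2*k+1),
      Finset.range_eq_Ico, Finset.sum_Ico_consecutive _ (Nat.zero_le _) (by omega),
      ← Finset.range_eq_Ico]
    exact hsum1
  have hB : (2:ℝ)^(2*k+1) * ((1-q)^(k+1) * q^k) = (1 - 2*α) * (1 - 4*α^2)^k := by
    have e1 : (1:ℝ) - 4*α^2 = 4 * ((1-q) * q) := by rw [hq]; ring
    have e2 : (2:ℝ)^(2*k+1) = 2 * 4^k := by
      rw [pow_succ, pow_mul]; norm_num [mul_comm]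
    have e3 : (1:ℝ) - 2*α = 2*(1-q) := by rw [hq]; ring
    rw [e1, e2, e3, mul_pow, mul_pow, pow_succ]
    ring
  have hlow : binomialLow (2*k+1) (k+1) q ≤ (1 - 2*α) * (1 - 4*α^2)^k := by
    calc binomialLow (2*k+1) (k+1) q
        ≤ ∑ x ∈ Finset.range (k+1), ((2*k+1).choose x : ℝ) * ((1-q)^(k+1) * q^k) := by
          rw [binomialLow]
          apply Finset.sum_le_sum
          intro x hx
          rw [Finset.mem_range] at hx
          have hx' : x ≤ k := by omega
          have e1 : 2*k+1-x = (k+1)+(k-x) := by omega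
          have e2 : x + (k-x) = k := by omega
          rw [mul_assoc]
          apply mul_le_mul_of_nonneg_left _ (Nat.cast_nonneg _)
          calc q^x * (1-q)^(2*k+1-x)
              = (1-q)^(k+1) * (q^x * (1-q)^(k-x)) := by rw [e1, pow_add]; ring
            _ ≤ (1-q)^(k+1) * (q^x * q^(k-x)) := by
                apply mul_le_mul_of_nonneg_left _ (pow_nonneg hp0 _)
                apply mul_le_mul_of_nonneg_left _ (pow_nonneg hq0 _)
                exact pow_le_pow_left₀ hp0 hpq _
            _ = (1-q)^(k+1) * q^k := by rw [← pow_add, e2]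
      _ ≤ ∑ x ∈ Finset.range (2*k+1+1), ((2*k+1).choose x : ℝ) * ((1-q)^(k+1) * q^k) := by
          apply Finset.sum_le_sum_of_subset_of_nonneg
          · exact Finset.range_subset_range.mpr (by omega)
          · intro i _ _
            exact mul_nonneg (Nat.cast_nonneg _)
              (mul_nonneg (pow_nonneg hp0 _) (pow_nonneg hq0 _))
      _ = (2:ℝ)^(2*k+1) * ((1-q)^(k+1) * q^k) := by
          rw [← Finset.sum_mul, ← Nat.cast_sum, Nat.sum_range_choose]
          push_cast
          ring
      _ = (1 - 2*α) * (1 - 4*α^2)^k := hB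
  have harith : (1 - 2*α) * (1 - 4*α^2)^k ≤ 1 / (1 + M * α^2) := by
    have h4A : 0 ≤ 1 - 4*α^2 := by nlinarith
    have hBern : 1 + (k:ℝ) * (4*α^2) ≤ (1 + 4*α^2)^k :=
      one_add_mul_le_pow (by nlinarith) k
    have hpow : (1 - 4*α^2)^k * (1 + 4*α^2)^k ≤ 1 := by
      rw [← mul_pow]
      apply pow_le_one₀ (mul_nonneg h4A (by positivity)) (by nlinarith [sq_nonneg (α^2)])
    have hnn : 0 ≤ (1 - 4*α^2)^k := pow_nonneg h4A k
    have h5 : (1 + M*α^2) * (1 - 2*α) ≤ 1 + (k:ℝ)*(4*α^2) := by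
      rw [hM]
      nlinarith [mul_nonneg (by linarith : (0:ℝ) ≤ 2*(k:ℝ)-1) (sq_nonneg α),
        hα0.le,
        mul_nonneg (by linarith : (0:ℝ) ≤ 2*(k:ℝ)+1) (pow_nonneg hα0.le 3)]
    rw [le_div_iff₀ (by nlinarith [mul_nonneg hMpos.le (sq_nonneg α)] : (0:ℝ) < 1 + M*α^2)]
    calc (1-2*α)*(1-4*α^2)^k * (1+M*α^2)
        = (1-4*α^2)^k * ((1+M*α^2)*(1-2*α)) := by ring
      _ ≤ (1-4*α^2)^k * (1 + (k:ℝ)*(4*α^2)) := mul_le_mul_of_nonneg_left h5 hnn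
      _ ≤ (1-4*α^2)^k * (1+4*α^2)^k := mul_le_mul_of_nonneg_left hBern hnn
      _ ≤ 1 := hpow
  have hlow_final : binomialLow (2*k+1) (k+1) q ≤ 1/(1+M*α^2) := hlow.trans harith
  refine ⟨hlow_final, ?_⟩
  have h15 : 1/(1+M*α^2) ≤ 1/5 :=
    one_div_le_one_div_of_le (by norm_num) (by linarith)
  linarith [hsplit]
end

section
/- Let m = 2ℓ − 1 ≥ 1 be an odd integer, let α ∈ [0, 1/2], and let X ~ Binomial(m, 1/2 + α). Then P(X ≥ ℓ) ≥ 1/2 + 2^{−m} · C(2ℓ − 1, ℓ − 1) · (1 − (1 − 2α)^{ℓ − 1}). -/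
open Finset

lemma choose_id_left (m x : ℕ) (hm : 1 ≤ m) (hx : 1 ≤ x) :
    x * m.choose x = m * (m - 1).choose (x - 1) := by
  have h := Nat.add_one_mul_choose_eq (m - 1) (x - 1)
  rw [show m - 1 + 1 = m by omega, show x - 1 + 1 = x by omega] at h
  exact (Nat.mul_comm x _).trans h.symm

lemma choose_id_right (m x : ℕ) (hm : 1 ≤ m) (hx : x ≤ m) :
    m.choose x * (m - x) = m * (m - 1).choose x := by
  rcases Nat.eq_or_lt_of_le hx with h | h
  · have h0 : (m - 1).choose x = 0 := Nat.choose_eq_zero_of_lt (by omega)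
    have h1 : m - x = 0 := by omega
    rw [h0, h1]; simp
  · have h1 := Nat.choose_succ_right_eq m x
    have h2 := Nat.add_one_mul_choose_eq (m - 1) x
    rw [show m - 1 + 1 = m by omega] at h2
    rw [← h1]
    exact h2.symm

/-- Value at the unbiased point: `P(X ≥ ℓ) = 1/2` for `X ~ Binomial(2ℓ-1, 1/2)`. -/
lemma binomialTail_half (ℓ : ℕ) (hℓ : 1 ≤ ℓ) :
    binomialTail (2 * ℓ - 1) ℓ (1 / 2) = 1 / 2 := by
  set m := 2 * ℓ - 1 with hm
  have hmℓ : ℓ ≤ m := by omega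
  have h1 : binomialTail m ℓ (1 / 2) = (∑ x ∈ Finset.Icc ℓ m, (m.choose x : ℝ)) * (1 / 2) ^ m := by
    rw [binomialTail, Finset.sum_mul]
    refine Finset.sum_congr rfl fun x hx => ?_
    have hxm : x ≤ m := (Finset.mem_Icc.mp hx).2
    have h12 : (1 : ℝ) - 1 / 2 = 1 / 2 := by norm_num
    rw [h12, mul_assoc, ← pow_add]
    congr 2
    omega
  have h2 : (∑ x ∈ Finset.Icc ℓ m, (m.choose x : ℕ)) = 2 ^ (m - 1) := by
    have hrefl : (∑ x ∈ Finset.Icc ℓ m, (m.choose x : ℕ)) =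
        ∑ x ∈ Finset.Icc 0 (ℓ - 1), (m.choose x : ℕ) := by
      refine Finset.sum_nbij' (fun x => m - x) (fun x => m - x) ?_ ?_ ?_ ?_ ?_
      · intro a ha; simp only [Finset.mem_Icc] at *; omega
      · intro a ha; simp only [Finset.mem_Icc] at *; omega
      · intro a ha; simp only [Finset.mem_Icc] at ha; show m - (m - a) = a; omega
      · intro a ha; simp only [Finset.mem_Icc] at ha; show m - (m - a) = a; omega
      · intro a ha
        simp only [Finset.mem_Icc] at ha
        rw [Nat.choose_symm (by omega)]
    have hsplit : (∑ x ∈ Finset.Icc 0 (ℓ - 1), (m.choose x : ℕ)) +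
        (∑ x ∈ Finset.Icc ℓ m, (m.choose x : ℕ)) = 2 ^ m := by
      rw [← Nat.sum_range_choose m, Finset.range_eq_Ico,
        ← Finset.sum_Ico_consecutive (fun x => m.choose x) (Nat.zero_le ℓ)
          (by omega : ℓ ≤ m + 1)]
      congr 1
      · rw [← Finset.Ico_add_one_right_eq_Icc, show ℓ - 1 + 1 = ℓ from by omega]
    have hp : 2 ^ (m - 1) + 2 ^ (m - 1) = 2 ^ m := by
      have h := pow_succ 2 (m - 1)
      rw [Nat.sub_add_cancel (by omega : 1 ≤ m)] at h
      omega
    omega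
  rw [h1]
  have hcast : (∑ x ∈ Finset.Icc ℓ m, (m.choose x : ℝ)) = (2 : ℝ) ^ (m - 1) := by
    rw [← Nat.cast_sum, h2]; push_cast; ring
  rw [hcast]
  have hme : (m - 1) + 1 = m := Nat.sub_add_cancel (by omega)
  calc (2 : ℝ) ^ (m - 1) * (1 / 2) ^ m
      = (2 : ℝ) ^ (m - 1) * (1 / 2) ^ ((m - 1) + 1) := by rw [hme]
    _ = ((2 : ℝ) * (1 / 2)) ^ (m - 1) * (1 / 2) := by rw [pow_succ, ← mul_assoc, mul_pow]
    _ = 1 / 2 := by norm_num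

/-- Derivative of the shifted binomial tail. -/
lemma binomialTail_hasDerivAt (ℓ m : ℕ) (hℓ : 1 ≤ ℓ) (hℓm : ℓ ≤ m) (a : ℝ) :
    HasDerivAt (fun a => binomialTail m ℓ (1 / 2 + a))
      ((m : ℝ) * ((m - 1).choose (ℓ - 1) : ℝ) * (1 / 2 + a) ^ (ℓ - 1)
        * (1 / 2 - a) ^ (m - ℓ)) a := by
  have hfun : (fun a : ℝ => binomialTail m ℓ (1 / 2 + a))
      = fun a : ℝ => ∑ x ∈ Finset.Icc ℓ m,
        (m.choose x : ℝ) * (1 / 2 + a) ^ x * (1 / 2 - a) ^ (m - x) := by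
    funext a
    unfold binomialTail
    refine Finset.sum_congr rfl fun x _ => ?_
    rw [show (1 : ℝ) - (1 / 2 + a) = 1 / 2 - a by ring]
  rw [hfun]
  set G : ℕ → ℝ := fun x => (m : ℝ) * ((m - 1).choose (x - 1) : ℝ) * (1 / 2 + a) ^ (x - 1)
    * (1 / 2 - a) ^ (m - x) with hG
  have key : ∀ x ∈ Finset.Icc ℓ m,
      HasDerivAt (fun a : ℝ => (m.choose x : ℝ) * (1 / 2 + a) ^ x * (1 / 2 - a) ^ (m - x))
        (G x - G (x + 1)) a := by
    intro x hx
    simp only [Finset.mem_Icc] at hx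
    have hadd : HasDerivAt (fun a : ℝ => 1 / 2 + a) 1 a := by
      simpa using (hasDerivAt_id a).const_add (1 / 2 : ℝ)
    have hsub : HasDerivAt (fun a : ℝ => 1 / 2 - a) (-1) a := by
      simpa using (hasDerivAt_id a).const_sub (1 / 2 : ℝ)
    have h1 : HasDerivAt (fun a : ℝ => (1 / 2 + a) ^ x)
        ((x : ℝ) * (1 / 2 + a) ^ (x - 1) * 1) a := hadd.pow x
    have h2 : HasDerivAt (fun a : ℝ => (1 / 2 - a) ^ (m - x))
        (((m - x : ℕ) : ℝ) * (1 / 2 - a) ^ (m - x - 1) * (-1)) a := hsub.pow (m - x)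
    have hmul := (h1.const_mul (m.choose x : ℝ)).mul h2
    have e1 : (x : ℝ) * (m.choose x : ℝ) = (m : ℝ) * ((m - 1).choose (x - 1) : ℝ) := by
      exact_mod_cast congrArg (Nat.cast (R := ℝ))
        (choose_id_left m x (by omega) (by omega))
    have e2 : (m.choose x : ℝ) * ((m - x : ℕ) : ℝ) = (m : ℝ) * ((m - 1).choose x : ℝ) := by
      exact_mod_cast congrArg (Nat.cast (R := ℝ)) (choose_id_right m x (by omega) hx.2)
    refine hmul.congr_deriv (Eq.symm ?_)
    simp only [hG]
    rw [show x + 1 - 1 = x by omega, show m - (x + 1) = m - x - 1 by omega]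
    push_cast [Nat.cast_sub hx.2] at e1 e2 ⊢
    linear_combination (-((1 / 2 + a) ^ (x - 1) * (1 / 2 - a) ^ (m - x))) * e1
      + ((1 / 2 + a) ^ x * (1 / 2 - a) ^ (m - x - 1)) * e2
  have hsum : HasDerivAt (fun a : ℝ => ∑ x ∈ Finset.Icc ℓ m,
      (m.choose x : ℝ) * (1 / 2 + a) ^ x * (1 / 2 - a) ^ (m - x))
      (∑ x ∈ Finset.Icc ℓ m, (G x - G (x + 1))) a := HasDerivAt.fun_sum key
  have htel : (∑ x ∈ Finset.Icc ℓ m, (G x - G (x + 1))) = G ℓ - G (m + 1) := by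
    rw [← Finset.Ico_add_one_right_eq_Icc, Finset.sum_Ico_eq_sum_range]
    have hcongr : ∀ i ∈ Finset.range (m + 1 - ℓ), G (ℓ + i) - G (ℓ + i + 1)
        = (fun j => G (ℓ + j)) i - (fun j => G (ℓ + j)) (i + 1) := by
      intro i _; simp [Nat.add_assoc]
    rw [Finset.sum_congr rfl hcongr, Finset.sum_range_sub']
    congr 2
    omega
  have hGm : G (m + 1) = 0 := by
    simp only [hG]
    rw [Nat.choose_eq_zero_of_lt (by omega)]
    simp
  rw [htel, hGm, sub_zero] at hsum
  simpa only [hG, Nat.add_sub_cancel] using hsum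

/-- For odd `m = 2ℓ - 1 ≥ 1`, `α ∈ [0, 1/2]` and `X ~ Binomial(m, 1/2 + α)`:
`P(X ≥ ℓ) ≥ 1/2 + 2^{-m} * C(2ℓ-1, ℓ-1) * (1 - (1 - 2α)^{ℓ-1})`. -/
theorem binomial_small_bias (ℓ m : ℕ) (α : ℝ) (hℓ : 1 ≤ ℓ) (hm : m = 2 * ℓ - 1)
    (hα : α ∈ Set.Icc (0 : ℝ) (1 / 2)) :
    binomialTail m ℓ (1 / 2 + α) ≥
      1 / 2 + ((2 : ℝ) ^ m)⁻¹ * ((2 * ℓ - 1).choose (ℓ - 1) : ℝ) * (1 - (1 - 2 * α) ^ (ℓ - 1)) := by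
  obtain ⟨hα0, hα1⟩ := hα
  have hℓm : ℓ ≤ m := by omega
  set c : ℝ := ((2 : ℝ) ^ m)⁻¹ * (m.choose ℓ : ℝ) with hc
  set F : ℝ → ℝ := fun a => binomialTail m ℓ (1 / 2 + a) - c * (1 - (1 - 2 * a) ^ ℓ) with hF
  have hderiv : ∀ a : ℝ, HasDerivAt F
      ((m : ℝ) * ((m - 1).choose (ℓ - 1) : ℝ) * (1 / 2 + a) ^ (ℓ - 1) * (1 / 2 - a) ^ (m - ℓ)
        - c * (2 * ℓ * (1 - 2 * a) ^ (ℓ - 1))) a := by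
    intro a
    have h1 := binomialTail_hasDerivAt ℓ m hℓ hℓm a
    have hinner : HasDerivAt (fun a : ℝ => 1 - 2 * a) (-2) a := by
      simpa using ((hasDerivAt_id a).const_mul (2 : ℝ)).const_sub (1 : ℝ)
    have hp : HasDerivAt (fun a : ℝ => (1 - 2 * a) ^ ℓ)
        ((ℓ : ℝ) * (1 - 2 * a) ^ (ℓ - 1) * (-2)) a := hinner.pow ℓ
    have h2 : HasDerivAt (fun a : ℝ => c * (1 - (1 - 2 * a) ^ ℓ))
        (c * (2 * ℓ * (1 - 2 * a) ^ (ℓ - 1))) a := by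
      have := (hp.const_sub (1 : ℝ)).const_mul c
      refine this.congr_deriv (Eq.symm ?_)
      ring
    exact h1.sub h2
  have hderiv_nonneg : ∀ a : ℝ, 0 ≤ a → a ≤ 1 / 2 →
      0 ≤ (m : ℝ) * ((m - 1).choose (ℓ - 1) : ℝ) * (1 / 2 + a) ^ (ℓ - 1)
        * (1 / 2 - a) ^ (m - ℓ) - c * (2 * ℓ * (1 - 2 * a) ^ (ℓ - 1)) := by
    intro a ha0 ha1
    have hml : m - ℓ = ℓ - 1 := by omega
    rw [hml]
    have hq0 : (0 : ℝ) ≤ 1 / 2 - a := by linarith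
    have key : ((1 / 2 : ℝ)) * (1 / 2 - a) ≤ (1 / 2 + a) * (1 / 2 - a) := by nlinarith
    have hpow : ((1 / 2 : ℝ) * (1 / 2 - a)) ^ (ℓ - 1)
        ≤ (1 / 2 + a) ^ (ℓ - 1) * (1 / 2 - a) ^ (ℓ - 1) := by
      rw [← mul_pow]
      exact pow_le_pow_left₀ (by positivity) key (ℓ - 1)
    have hcoeff : (m : ℝ) * ((m - 1).choose (ℓ - 1) : ℝ) = (ℓ : ℝ) * (m.choose ℓ : ℝ) := by
      have h := choose_id_left m ℓ (by omega) hℓ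
      have h' := congrArg (Nat.cast (R := ℝ)) h
      push_cast at h'
      linarith [h']
    have hexp : ((1 / 2 : ℝ) * (1 / 2 - a)) ^ (ℓ - 1)
        = ((2 : ℝ) ^ m)⁻¹ * 2 * (1 - 2 * a) ^ (ℓ - 1) := by
      rw [show ((1 / 2 : ℝ) * (1 / 2 - a)) = (1 / 4) * (1 - 2 * a) by ring, mul_pow]
      have h4 : ((1 / 4 : ℝ)) ^ (ℓ - 1) = ((2 : ℝ) ^ m)⁻¹ * 2 := by
        have h2m : (2 : ℝ) ^ m = (2 : ℝ) ^ (2 * (ℓ - 1)) * 2 := by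
          rw [← pow_succ]; congr 1; omega
        rw [h2m, mul_inv, mul_assoc, show ((2 : ℝ))⁻¹ * 2 = 1 by norm_num, mul_one,
          show (1 / 4 : ℝ) = ((2 : ℝ) ^ 2)⁻¹ by norm_num, inv_pow, ← pow_mul]
      rw [h4]
    have hchoose_nonneg : (0 : ℝ) ≤ (m.choose ℓ : ℝ) := Nat.cast_nonneg _
    have hl_nonneg : (0 : ℝ) ≤ (ℓ : ℝ) := Nat.cast_nonneg _
    have hfinal : (ℓ : ℝ) * ((m.choose ℓ : ℝ) * (((2 : ℝ) ^ m)⁻¹ * 2 * (1 - 2 * a) ^ (ℓ - 1)))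
        ≤ (ℓ : ℝ) * ((m.choose ℓ : ℝ) * ((1 / 2 + a) ^ (ℓ - 1) * (1 / 2 - a) ^ (ℓ - 1))) := by
      apply mul_le_mul_of_nonneg_left _ hl_nonneg
      apply mul_le_mul_of_nonneg_left _ hchoose_nonneg
      rw [← hexp]
      exact hpow
    have heq1 : c * (2 * ℓ * (1 - 2 * a) ^ (ℓ - 1))
        = (ℓ : ℝ) * ((m.choose ℓ : ℝ) * (((2 : ℝ) ^ m)⁻¹ * 2 * (1 - 2 * a) ^ (ℓ - 1))) := by
      rw [hc]; ring
    have heq2 : (m : ℝ) * ((m - 1).choose (ℓ - 1) : ℝ) * (1 / 2 + a) ^ (ℓ - 1)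
        * (1 / 2 - a) ^ (ℓ - 1)
        = (ℓ : ℝ) * ((m.choose ℓ : ℝ) * ((1 / 2 + a) ^ (ℓ - 1) * (1 / 2 - a) ^ (ℓ - 1))) := by
      rw [hcoeff]; ring
    rw [heq1, heq2]
    linarith [hfinal]
  have hmono : MonotoneOn F (Set.Icc 0 (1 / 2)) := by
    apply monotoneOn_of_deriv_nonneg (convex_Icc _ _)
    · exact fun x _ => ((hderiv x).continuousAt).continuousWithinAt
    · exact fun x _ => ((hderiv x).differentiableAt).differentiableWithinAt
    · intro x hx
      rw [interior_Icc] at hx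
      rw [(hderiv x).deriv]
      exact hderiv_nonneg x (le_of_lt hx.1) (le_of_lt hx.2)
  have hF0 : F 0 = 1 / 2 := by
    simp only [hF]
    rw [show (1 / 2 : ℝ) + 0 = 1 / 2 by ring, hm, binomialTail_half ℓ hℓ]
    simp
  have hFα : F α ≥ 1 / 2 := by
    rw [← hF0]
    exact hmono (Set.mem_Icc.mpr ⟨le_refl 0, by norm_num⟩) (Set.mem_Icc.mpr ⟨hα0, hα1⟩) hα0
  have hchoose_eq : (2 * ℓ - 1).choose (ℓ - 1) = m.choose ℓ := by
    rw [hm, ← Nat.choose_symm (show ℓ ≤ 2 * ℓ - 1 by omega)]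
    congr 1
    omega
  have hlast : c * (1 - (1 - 2 * α) ^ ℓ)
      ≥ ((2 : ℝ) ^ m)⁻¹ * ((2 * ℓ - 1).choose (ℓ - 1) : ℝ) * (1 - (1 - 2 * α) ^ (ℓ - 1)) := by
    rw [hchoose_eq, hc]
    have h01 : (0 : ℝ) ≤ 1 - 2 * α := by linarith
    have h11 : (1 : ℝ) - 2 * α ≤ 1 := by linarith
    have hple : (1 - 2 * α) ^ ℓ ≤ (1 - 2 * α) ^ (ℓ - 1) :=
      pow_le_pow_of_le_one h01 h11 (by omega)
    have hc_nonneg : (0 : ℝ) ≤ ((2 : ℝ) ^ m)⁻¹ * (m.choose ℓ : ℝ) := by positivity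
    nlinarith [hple, hc_nonneg]
  have hsplitF : binomialTail m ℓ (1 / 2 + α) = F α + c * (1 - (1 - 2 * α) ^ ℓ) := by
    simp [hF]
  rw [hsplitF]
  linarith [hFα, hlast]
end

section
/- Let k ≥ 2 and let H be a k × k real matrix with all entries in {−1, +1} satisfying HᵀH = k·I_k. For each column j ∈ [k] let χ_j = {r ∈ [k] : H_{rj} = +1}. Let p be a probability distribution on [k] and u the uniform distribution on [k]. Then Σ_{j=1}^{k} (p(χ_j) − u(χ_j))² = (k/4) · Σ_{r=1}^{k} (p_r − 1/k)². -/
open Finset Matrix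

/-- Hadamard transform is norm-preserving: for a `k × k` `±1` matrix `H` with `Hᵀ H = k I` and a
probability distribution `p` on `[k]`, with `χ_j := {r : H r j = +1}` and `u` uniform,
`∑_j (p(χ_j) - u(χ_j))² = (k/4) ∑_r (p_r - 1/k)²`. -/
theorem hadamard_norm_preserving (k : ℕ) (hk : 2 ≤ k) (H : Matrix (Fin k) (Fin k) ℝ)
    (hH : ∀ r j, H r j = 1 ∨ H r j = -1)
    (hHad : Hᵀ * H = (k : ℝ) • (1 : Matrix (Fin k) (Fin k) ℝ))
    (p : Fin k → ℝ) (hp0 : ∀ r, 0 ≤ p r) (hp1 : ∑ r, p r = 1) :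
    ∑ j : Fin k,
        ((∑ r ∈ Finset.univ.filter fun r => H r j = 1, p r) -
          ∑ r ∈ Finset.univ.filter fun r => H r j = 1, (1 / k : ℝ)) ^ 2 =
      (k / 4 : ℝ) * ∑ r : Fin k, (p r - 1 / k) ^ 2 := by
  have hk0 : (k : ℝ) ≠ 0 := by positivity
  set q : Fin k → ℝ := fun r => p r - 1 / k with hqdef
  have hq : ∑ r, q r = 0 := by
    simp only [hqdef, Finset.sum_sub_distrib, hp1, Finset.sum_const, Finset.card_univ,
      Fintype.card_fin, nsmul_eq_mul]
    field_simp
    norm_num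
  -- H * Hᵀ = k • 1
  have h1 : Hᵀ * ((k : ℝ)⁻¹ • H) = 1 := by
    rw [Matrix.mul_smul, hHad, smul_smul, inv_mul_cancel₀ hk0, one_smul]
  have h2 : ((k : ℝ)⁻¹ • H) * Hᵀ = 1 := mul_eq_one_comm.mp h1
  have hHHT : H * Hᵀ = (k : ℝ) • (1 : Matrix (Fin k) (Fin k) ℝ) := by
    have := congrArg (fun M => (k : ℝ) • M) h2
    simpa [Matrix.smul_mul, smul_smul, mul_inv_cancel₀ hk0] using this
  have hcol : ∀ r s : Fin k, ∑ j, H r j * H s j = if r = s then (k : ℝ) else 0 := by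
    intro r s
    have := congrFun (congrFun hHHT r) s
    simpa [Matrix.mul_apply, Matrix.transpose_apply, Matrix.one_apply,
      Matrix.smul_apply] using this
  -- key: filtered sum equals (1/2) * ∑ r, H r j * q r
  have key : ∀ j : Fin k,
      ((∑ r ∈ Finset.univ.filter fun r => H r j = 1, p r) -
        ∑ r ∈ Finset.univ.filter fun r => H r j = 1, (1 / k : ℝ)) =
      (1 / 2) * ∑ r, H r j * q r := by
    intro j
    rw [← Finset.sum_sub_distrib]
    have hsplit : ∑ r, H r j * q r =
        (∑ r ∈ Finset.univ.filter (fun r => H r j = 1), q r) +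
        ∑ r ∈ Finset.univ.filter (fun r => ¬ H r j = 1), (- q r) := by
      rw [← Finset.sum_filter_add_sum_filter_not Finset.univ (fun r => H r j = 1)
        (fun r => H r j * q r)]
      congr 1
      · exact Finset.sum_congr rfl fun r hr => by
          rw [Finset.mem_filter] at hr; rw [hr.2, one_mul]
      · refine Finset.sum_congr rfl fun r hr => ?_
        rw [Finset.mem_filter] at hr
        rcases hH r j with h | h
        · exact absurd h hr.2
        · rw [h]; ring
    have hcompl : ∑ r ∈ Finset.univ.filter (fun r => ¬ H r j = 1), q r =
        - ∑ r ∈ Finset.univ.filter (fun r => H r j = 1), q r := by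
      have := Finset.sum_filter_add_sum_filter_not Finset.univ (fun r => H r j = 1) q
      rw [hq] at this
      linarith
    rw [Finset.sum_neg_distrib, hcompl] at hsplit
    rw [hsplit]
    ring
  simp only [key]
  have expand : ∑ j : Fin k, ((1 / 2 : ℝ) * ∑ r, H r j * q r) ^ 2 =
      (1 / 4 : ℝ) * ∑ j : Fin k, ∑ r, ∑ s, (H r j * q r) * (H s j * q s) := by
    rw [Finset.mul_sum]
    refine Finset.sum_congr rfl fun j _ => ?_
    have h : (∑ r, H r j * q r) * (∑ s, H s j * q s) =
        ∑ r, ∑ s, (H r j * q r) * (H s j * q s) := Finset.sum_mul_sum _ _ _ _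
    rw [mul_pow, pow_two (∑ r, H r j * q r), h]
    norm_num
  rw [expand]
  rw [Finset.sum_comm]
  have : ∀ r : Fin k, ∑ j : Fin k, ∑ s, (H r j * q r) * (H s j * q s) =
      (k : ℝ) * q r ^ 2 := by
    intro r
    rw [Finset.sum_comm]
    have step : ∀ s : Fin k, ∑ j : Fin k, (H r j * q r) * (H s j * q s) =
        q r * q s * (if r = s then (k : ℝ) else 0) := by
      intro s
      rw [← hcol r s, Finset.mul_sum]
      exact Finset.sum_congr rfl fun j _ => by ring
    simp only [step, mul_ite, mul_zero]
    rw [Finset.sum_ite_eq Finset.univ r (fun s => q r * q s * (k : ℝ))]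
    simp
    ring
  simp only [this]
  rw [← Finset.mul_sum]
  ring
end

section
/- Let k ≥ 2 and let H be a k × k real matrix with all entries in {−1, +1} satisfying HᵀH = k·I_k and whose first column is the all-ones vector. For each column j ∈ {2, …, k} let χ_j = {r ∈ [k] : H_{rj} = +1}, and for a probability distribution p on [k] define the biases δ_j := p(χ_j) − 1/2. Then Σ_{j=2}^{k} δ_j² ≥ d_TV(p, u)², where u is the uniform distribution on [k]. In particular, if d_TV(p, u) ≥ ε then Σ_{j=2}^{k} δ_j² ≥ ε². -/
open Finset Matrix

/-- For a `k × k` `±1` matrix `H` with `Hᵀ H = k I` whose first column is all-ones, a probability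
distribution `p` on `[k]`, and biases `δ_j := p(χ_j) - 1/2` for the columns `j ≥ 2`
(where `χ_j := {r : H r j = +1}`): `∑_{j ≥ 2} δ_j² ≥ d_TV(p, u)²`; in particular,
if `d_TV(p, u) ≥ ε` then `∑_{j ≥ 2} δ_j² ≥ ε²`. -/
theorem hadamard_bias_lower_bound (k : ℕ) (hk : 2 ≤ k) (H : Matrix (Fin k) (Fin k) ℝ)
    (hH : ∀ r j, H r j = 1 ∨ H r j = -1)
    (hHad : Hᵀ * H = (k : ℝ) • (1 : Matrix (Fin k) (Fin k) ℝ))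
    (hcol : ∀ r, H r ⟨0, by omega⟩ = 1)
    (p : Fin k → ℝ) (hp0 : ∀ r, 0 ≤ p r) (hp1 : ∑ r, p r = 1) :
    (∑ j ∈ Finset.univ.erase (⟨0, by omega⟩ : Fin k),
        ((∑ r ∈ Finset.univ.filter fun r => H r j = 1, p r) - 1 / 2) ^ 2 ≥
      ((1 / 2 : ℝ) * ∑ r : Fin k, |p r - 1 / k|) ^ 2) ∧
    ∀ ε : ℝ, 0 ≤ ε → (1 / 2 : ℝ) * ∑ r : Fin k, |p r - 1 / k| ≥ ε →
      ∑ j ∈ Finset.univ.erase (⟨0, by omega⟩ : Fin k),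
          ((∑ r ∈ Finset.univ.filter fun r => H r j = 1, p r) - 1 / 2) ^ 2 ≥ ε ^ 2 := by
  have hkne : (k : ℝ) ≠ 0 := by positivity
  set z : Fin k := ⟨0, by omega⟩ with hz
  set q : Fin k → ℝ := fun r => p r - 1 / k with hq
  have hqsum : ∑ r, q r = 0 := by
    simp only [hq, Finset.sum_sub_distrib, hp1, Finset.sum_const, Finset.card_univ,
      Fintype.card_fin, nsmul_eq_mul]
    field_simp
    simp
  -- H * Hᵀ = k • 1
  have hBH : ((k : ℝ)⁻¹ • Hᵀ) * H = 1 := by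
    rw [smul_mul_assoc, hHad, smul_smul, inv_mul_cancel₀ hkne, one_smul]
  have hHB : H * ((k : ℝ)⁻¹ • Hᵀ) = 1 := mul_eq_one_comm.mp hBH
  have hHHt : H * Hᵀ = (k : ℝ) • 1 := by
    calc H * Hᵀ = H * ((k : ℝ) • ((k : ℝ)⁻¹ • Hᵀ)) := by
          rw [smul_smul, mul_inv_cancel₀ hkne, one_smul]
      _ = (k : ℝ) • (H * ((k : ℝ)⁻¹ • Hᵀ)) := by rw [Matrix.mul_smul]
      _ = (k : ℝ) • 1 := by rw [hHB]
  have hentry : ∀ r s : Fin k, ∑ j, H r j * H s j = if r = s then (k : ℝ) else 0 := by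
    intro r s
    have := congrFun (congrFun hHHt r) s
    simpa [Matrix.mul_apply, Matrix.transpose_apply, Matrix.one_apply, Matrix.smul_apply,
      mul_ite, mul_one, mul_zero] using this
  -- column sums
  have hcolsum : ∀ j : Fin k, j ≠ z → ∑ r, H r j = 0 := by
    intro j hj
    have := congrFun (congrFun hHad j) z
    simp only [Matrix.mul_apply, Matrix.transpose_apply, Matrix.smul_apply, Matrix.one_apply,
      if_neg hj, smul_zero] at this
    simpa [hcol] using this
  -- per-column identity
  have hdelta : ∀ j : Fin k, j ≠ z →
      (∑ r ∈ Finset.univ.filter fun r => H r j = 1, p r) - 1 / 2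
        = (1 / 2) * ∑ r, H r j * q r := by
    intro j hj
    have h1 : ∑ r, H r j * q r = ∑ r, H r j * p r := by
      simp only [hq, mul_sub, Finset.sum_sub_distrib]
      rw [← Finset.sum_mul, hcolsum j hj, zero_mul, sub_zero]
    have hsplit : ∑ r ∈ Finset.univ.filter (fun r => H r j = 1), p r
        + ∑ r ∈ Finset.univ.filter (fun r => ¬ H r j = 1), p r = 1 := by
      rw [Finset.sum_filter_add_sum_filter_not]; exact hp1
    have h2 : ∑ r, H r j * p r
        = 2 * (∑ r ∈ Finset.univ.filter (fun r => H r j = 1), p r) - 1 := by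
      rw [← Finset.sum_filter_add_sum_filter_not Finset.univ (fun r => H r j = 1)
        (fun r => H r j * p r)]
      have hA : ∑ r ∈ Finset.univ.filter (fun r => H r j = 1), H r j * p r
          = ∑ r ∈ Finset.univ.filter (fun r => H r j = 1), p r :=
        Finset.sum_congr rfl fun r hr => by rw [(Finset.mem_filter.mp hr).2, one_mul]
      have hB : ∑ r ∈ Finset.univ.filter (fun r => ¬ H r j = 1), H r j * p r
          = - ∑ r ∈ Finset.univ.filter (fun r => ¬ H r j = 1), p r := by
        rw [← Finset.sum_neg_distrib]
        refine Finset.sum_congr rfl fun r hr => ?_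
        have := (hH r j).resolve_left (Finset.mem_filter.mp hr).2
        rw [this]; ring
      rw [hA, hB]; linarith
    rw [h1, h2]; ring
  -- main quadratic identity
  have hmain : ∑ j : Fin k, (∑ r, H r j * q r) ^ 2 = (k : ℝ) * ∑ r, q r ^ 2 := by
    calc ∑ j : Fin k, (∑ r, H r j * q r) ^ 2
        = ∑ j : Fin k, ∑ r, ∑ s, (q r * q s) * (H r j * H s j) := by
          refine Finset.sum_congr rfl fun j _ => ?_
          rw [sq, Finset.sum_mul_sum]
          exact Finset.sum_congr rfl fun r _ => Finset.sum_congr rfl fun s _ => by ring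
      _ = ∑ r, ∑ s, (q r * q s) * ∑ j, H r j * H s j := by
          rw [Finset.sum_comm]
          refine Finset.sum_congr rfl fun r _ => ?_
          rw [Finset.sum_comm]
          exact Finset.sum_congr rfl fun s _ => (Finset.mul_sum _ _ _).symm
      _ = ∑ r, (q r * q r) * (k : ℝ) := by
          refine Finset.sum_congr rfl fun r _ => ?_
          rw [Finset.sum_eq_single r]
          · rw [hentry, if_pos rfl]
          · intro s _ hs
            rw [hentry, if_neg (fun h => hs h.symm), mul_zero]
          · simp
      _ = (k : ℝ) * ∑ r, q r ^ 2 := by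
          rw [Finset.mul_sum]
          exact Finset.sum_congr rfl fun r _ => by ring
  -- the z-column gives 0
  have hzero : ∑ r, H r z * q r = 0 := by
    have : ∀ r, H r z * q r = q r := fun r => by rw [hcol r, one_mul]
    rw [Finset.sum_congr rfl fun r _ => this r, hqsum]
  have herase : ∑ j ∈ Finset.univ.erase z, (∑ r, H r j * q r) ^ 2
      = (k : ℝ) * ∑ r, q r ^ 2 := by
    rw [← hmain, ← Finset.add_sum_erase _ _ (Finset.mem_univ z), hzero]
    ring
  have hsum : ∑ j ∈ Finset.univ.erase z,
      ((∑ r ∈ Finset.univ.filter fun r => H r j = 1, p r) - 1 / 2) ^ 2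
      = (1 / 4) * ((k : ℝ) * ∑ r, q r ^ 2) := by
    rw [Finset.sum_congr rfl fun j hj => by
      rw [hdelta j (Finset.ne_of_mem_erase hj)]]
    simp_rw [mul_pow]
    rw [← Finset.mul_sum, herase]
    norm_num
  -- Cauchy–Schwarz
  have hCS : (∑ r, |q r|) ^ 2 ≤ (k : ℝ) * ∑ r, q r ^ 2 := by
    have := sq_sum_le_card_mul_sum_sq (s := (Finset.univ : Finset (Fin k)))
      (f := fun r => |q r|)
    simpa [sq_abs, Finset.card_univ] using this
  have hTV : ((1 / 2 : ℝ) * ∑ r : Fin k, |p r - 1 / k|) ^ 2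
      ≤ ∑ j ∈ Finset.univ.erase z,
        ((∑ r ∈ Finset.univ.filter fun r => H r j = 1, p r) - 1 / 2) ^ 2 := by
    rw [hsum, mul_pow]
    have : (∑ r : Fin k, |p r - 1 / k|) = ∑ r, |q r| := rfl
    rw [this]
    nlinarith [hCS]
  refine ⟨hTV, fun ε hε hεTV => ?_⟩
  calc ε ^ 2 ≤ ((1 / 2 : ℝ) * ∑ r : Fin k, |p r - 1 / k|) ^ 2 :=
        pow_le_pow_left₀ hε hεTV 2
    _ ≤ _ := hTV
end

section
/- In the product-distribution setup with n ≥ 2 i.i.d. samples, the statistic Z := ‖X̄‖₂² satisfies Var[Z] ≤ 2d/n² + (4(n − 1)/n²)·‖μ‖₂². -/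
open Finset MeasureTheory ProbabilityTheory

section Aux

variable {Ω : Type*} [MeasurableSpace Ω] {P : Measure Ω}

private lemma integrable_of_bdd [IsProbabilityMeasure P] {f : Ω → ℝ} {C : ℝ}
    (hm : Measurable f) (hb : ∀ ω, |f ω| ≤ C) : Integrable f P :=
  memLp_one_iff_integrable.mp <| MemLp.of_bound hm.aestronglyMeasurable C
    (ae_of_all _ fun ω => by simpa [Real.norm_eq_abs] using hb ω)

private lemma memℒp2_of_bdd [IsProbabilityMeasure P] {f : Ω → ℝ} {C : ℝ}
    (hm : Measurable f) (hb : ∀ ω, |f ω| ≤ C) : MemLp f 2 P :=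
  MemLp.of_bound hm.aestronglyMeasurable C
    (ae_of_all _ fun ω => by simpa [Real.norm_eq_abs] using hb ω)

private lemma int_prod_eq [IsProbabilityMeasure P] {ι : Type*} [DecidableEq ι]
    (Y : ι → Ω → ℝ) (hmeas : ∀ i, Measurable (Y i)) (habs : ∀ i ω, |Y i ω| ≤ 1)
    (hindep : iIndepFun Y P)
    (s : Finset ι) : ∫ ω, ∏ i ∈ s, Y i ω ∂P = ∏ i ∈ s, ∫ ω, Y i ω ∂P := by
  induction s using Finset.induction_on with
  | empty => simp
  | @insert a s ha ih =>
    have habs' : ∀ ω, |∏ i ∈ s, Y i ω| ≤ 1 := fun ω => by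
      rw [Finset.abs_prod]
      exact Finset.prod_le_one (fun i _ => abs_nonneg _) (fun i _ => habs i ω)
    have hmeas' : Measurable (fun ω => ∏ i ∈ s, Y i ω) :=
      Finset.measurable_prod _ (fun i _ => hmeas i)
    have hfun : (∏ i ∈ s, Y i) = fun ω => ∏ i ∈ s, Y i ω := by
      funext ω; exact Finset.prod_apply ω s Y
    have hInd := (hindep.indepFun_finset_prod_of_notMem hmeas ha).symm
    have hmul := IndepFun.integral_mul_eq_mul_integral hInd
      (integrable_of_bdd (hmeas a) (habs a)).1
      (by rw [hfun]; exact (integrable_of_bdd hmeas' habs').1)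
    have hfun2 : (Y a * ∏ i ∈ s, Y i) = fun ω => Y a ω * ∏ i ∈ s, Y i ω := by
      funext ω; rw [Pi.mul_apply, hfun]
    rw [hfun2, hfun] at hmul
    simp only [Finset.prod_insert ha]
    rw [← ih]
    exact hmul

private lemma sq_mean_bdd {n : ℕ} (hn : 0 < n) (v : Fin n → ℝ) (hv : ∀ i, |v i| ≤ 1) :
    |((1 / (n : ℝ)) * ∑ i, v i) ^ 2| ≤ 1 := by
  have hNpos : (0 : ℝ) < n := by exact_mod_cast hn
  have hA : |∑ i, v i| ≤ (n : ℝ) := by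
    calc |∑ i, v i| ≤ ∑ i, |v i| := Finset.abs_sum_le_sum_abs _ _
    _ ≤ ∑ _i : Fin n, (1 : ℝ) := Finset.sum_le_sum (fun i _ => hv i)
    _ = n := by simp
  rw [abs_pow, abs_mul, abs_of_pos (by positivity : (0:ℝ) < 1 / (n:ℝ))]
  have h1 : (1 / (n : ℝ)) * |∑ i, v i| ≤ 1 := by
    rw [div_mul_eq_mul_div, one_mul, div_le_one hNpos]; exact hA
  have h0 : (0:ℝ) ≤ (1 / (n : ℝ)) * |∑ i, v i| := by positivity
  nlinarith

set_option maxHeartbeats 2000000 in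
private lemma coord_var_bound [IsProbabilityMeasure P] (n : ℕ) (hn : 2 ≤ n)
    (Y : Fin n → Ω → ℝ) (hmeas : ∀ i, Measurable (Y i))
    (hval : ∀ i ω, Y i ω = 1 ∨ Y i ω = -1) (m : ℝ)
    (hprod : ∀ s : Finset (Fin n), ∫ ω, ∏ i ∈ s, Y i ω ∂P = m ^ s.card) :
    variance (fun ω => ((1 / (n : ℝ)) * ∑ i : Fin n, Y i ω) ^ 2) P
      ≤ 2 / (n : ℝ) ^ 2 + 4 * ((n : ℝ) - 1) / (n : ℝ) ^ 2 * m ^ 2 := by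
  have hN : (2 : ℝ) ≤ (n : ℝ) := by exact_mod_cast hn
  have hNpos : (0 : ℝ) < (n : ℝ) := by linarith
  have hsq : ∀ i ω, Y i ω * Y i ω = 1 := fun i ω => by
    rcases hval i ω with h | h <;> rw [h] <;> norm_num
  have habs : ∀ i ω, |Y i ω| ≤ 1 := fun i ω => by
    rcases hval i ω with h | h <;> rw [h] <;> norm_num
  have E2 : ∀ a b : Fin n, a ≠ b → ∫ ω, Y a ω * Y b ω ∂P = m ^ 2 := by
    intro a b hab
    have h := hprod {a, b}
    simp only [Finset.prod_pair hab, Finset.card_pair hab] at h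
    exact h
  have E4 : ∀ a b c d : Fin n, a ≠ b → a ≠ c → a ≠ d → b ≠ c → b ≠ d → c ≠ d →
      ∫ ω, (Y a ω * Y b ω) * (Y c ω * Y d ω) ∂P = m ^ 2 * m ^ 2 := by
    intro a b c d hab hac had hbc hbd hcd
    have hmem1 : a ∉ ({b, c, d} : Finset (Fin n)) := by simp [hab, hac, had]
    have hmem2 : b ∉ ({c, d} : Finset (Fin n)) := by simp [hbc, hbd]
    have hcard : ({a, b, c, d} : Finset (Fin n)).card = 4 := by
      rw [Finset.card_insert_of_notMem hmem1, Finset.card_insert_of_notMem hmem2,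
        Finset.card_pair hcd]
    have h := hprod {a, b, c, d}
    rw [hcard] at h
    simp only [Finset.prod_insert hmem1, Finset.prod_insert hmem2, Finset.prod_pair hcd] at h
    rw [show (fun ω => (Y a ω * Y b ω) * (Y c ω * Y d ω))
        = fun ω => Y a ω * (Y b ω * (Y c ω * Y d ω)) from funext fun ω => by ring]
    rw [h]; ring
  set D : Finset (Fin n × Fin n) := (Finset.univ : Finset (Fin n)).offDiag with hD
  set W : Fin n × Fin n → Ω → ℝ := fun p ω => Y p.1 ω * Y p.2 ω with hW
  have hWabs : ∀ p ω, |W p ω| ≤ 1 := by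
    intro p ω
    rw [hW]; dsimp only; rw [abs_mul]
    nlinarith [habs p.1 ω, habs p.2 ω, abs_nonneg (Y p.1 ω), abs_nonneg (Y p.2 ω)]
  have hWmeas : ∀ p, Measurable (W p) := fun p => (hmeas _).mul (hmeas _)
  have hWint : ∀ p, Integrable (W p) P := fun p => integrable_of_bdd (hWmeas p) (hWabs p)
  have hWWabs : ∀ p q ω, |W p ω * W q ω| ≤ 1 := fun p q ω => by
    rw [abs_mul]
    nlinarith [hWabs p ω, hWabs q ω, abs_nonneg (W p ω), abs_nonneg (W q ω)]
  have hWWint : ∀ p q, Integrable (fun ω => W p ω * W q ω) P :=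
    fun p q => integrable_of_bdd ((hWmeas p).mul (hWmeas q)) (hWWabs p q)
  set S : Ω → ℝ := fun ω => ∑ p ∈ D, W p ω with hS
  have hSint : Integrable S P := integrable_finset_sum _ (fun p _ => hWint p)
  have hSsq : ∀ ω, S ω ^ 2 = ∑ p ∈ D, ∑ q ∈ D, W p ω * W q ω := by
    intro ω; rw [hS]; dsimp only; rw [sq, Finset.sum_mul_sum]
  have hSsqint : Integrable (fun ω => S ω ^ 2) P := by
    simp only [hSsq]
    exact integrable_finset_sum _ fun p _ => integrable_finset_sum _ fun q _ => hWWint p q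
  -- the key pointwise identity
  have hkey : ∀ ω, (∑ i : Fin n, Y i ω) ^ 2 = (n : ℝ) + S ω := by
    intro ω
    have h1 : (∑ i : Fin n, Y i ω) ^ 2 = ∑ p ∈ Finset.univ ×ˢ Finset.univ, W p ω := by
      rw [sq, Finset.sum_mul_sum, Finset.sum_product]
    rw [h1, ← Finset.diag_union_offDiag (Finset.univ : Finset (Fin n)),
      Finset.sum_union (Finset.disjoint_diag_offDiag _)]
    have h2 : ∑ p ∈ (Finset.univ : Finset (Fin n)).diag, W p ω = (n : ℝ) := by
      rw [Finset.sum_diag]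
      simp only [hW]
      simp [hsq]
    rw [h2]
  have hg : (fun ω => ((1 / (n : ℝ)) * ∑ i : Fin n, Y i ω) ^ 2)
      = fun ω => ((n : ℝ) + S ω) / (n : ℝ) ^ 2 := by
    funext ω
    rw [mul_pow, ← hkey ω]
    field_simp
  have hgmeas : Measurable (fun ω => ((1 / (n : ℝ)) * ∑ i : Fin n, Y i ω) ^ 2) :=
    ((measurable_const.mul (Finset.measurable_sum _ fun i _ => hmeas i)).pow measurable_const)
  have hgabs : ∀ ω, |((1 / (n : ℝ)) * ∑ i : Fin n, Y i ω) ^ 2| ≤ 1 := fun ω =>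
    sq_mean_bdd (by omega) (fun i => Y i ω) (fun i => habs i ω)
  have hgmem : MemLp (fun ω => ((1 / (n : ℝ)) * ∑ i : Fin n, Y i ω) ^ 2) 2 P :=
    memℒp2_of_bdd hgmeas hgabs
  -- integrals
  have hEg : ∫ ω, ((n : ℝ) + S ω) / (n : ℝ) ^ 2 ∂P
      = ((n : ℝ) + ∫ ω, S ω ∂P) / (n : ℝ) ^ 2 := by
    rw [integral_div, integral_add (integrable_const _) hSint, integral_const]
    simp
  have hEg2 : ∫ ω, (((n : ℝ) + S ω) / (n : ℝ) ^ 2) ^ 2 ∂P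
      = ((n : ℝ) ^ 2 + 2 * (n : ℝ) * (∫ ω, S ω ∂P) + ∫ ω, S ω ^ 2 ∂P) / (n : ℝ) ^ 4 := by
    have h1 : ∀ ω, (((n : ℝ) + S ω) / (n : ℝ) ^ 2) ^ 2
        = ((n : ℝ) ^ 2 + 2 * (n : ℝ) * S ω + S ω ^ 2) / (n : ℝ) ^ 4 := by
      intro ω; rw [div_pow]; ring_nf
    simp only [h1]
    have hint2 : Integrable (fun ω => 2 * (n : ℝ) * S ω) P := hSint.const_mul _
    have hint1 : Integrable (fun ω => (n : ℝ) ^ 2 + 2 * (n : ℝ) * S ω) P :=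
      (integrable_const _).add hint2
    rw [integral_div, integral_add hint1 hSsqint, integral_add (integrable_const _) hint2,
      integral_const, integral_const_mul]
    simp
  have hvar : variance (fun ω => ((1 / (n : ℝ)) * ∑ i : Fin n, Y i ω) ^ 2) P
      = ((∫ ω, S ω ^ 2 ∂P) - (∫ ω, S ω ∂P) ^ 2) / (n : ℝ) ^ 4 := by
    rw [variance_eq_sub hgmem]
    have hsq' : (fun ω => ((1 / (n : ℝ)) * ∑ i : Fin n, Y i ω) ^ 2) ^ 2
        = fun ω => (((n : ℝ) + S ω) / (n : ℝ) ^ 2) ^ 2 := by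
      rw [hg]; funext ω; simp [Pi.pow_apply]
    calc P[(fun ω => ((1 / (n : ℝ)) * ∑ i : Fin n, Y i ω) ^ 2) ^ 2]
          - P[fun ω => ((1 / (n : ℝ)) * ∑ i : Fin n, Y i ω) ^ 2] ^ 2
        = (∫ ω, (((n : ℝ) + S ω) / (n : ℝ) ^ 2) ^ 2 ∂P)
          - (∫ ω, ((n : ℝ) + S ω) / (n : ℝ) ^ 2 ∂P) ^ 2 := by rw [hsq', hg]
      _ = ((∫ ω, S ω ^ 2 ∂P) - (∫ ω, S ω ∂P) ^ 2) / (n : ℝ) ^ 4 := by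
          rw [hEg, hEg2]
          field_simp
          ring
  -- integral computations
  have hI1 : ∫ ω, S ω ∂P = ∑ p ∈ D, m ^ 2 := by
    rw [hS]; dsimp only
    rw [integral_finset_sum _ (fun p _ => hWint p)]
    refine Finset.sum_congr rfl fun p hp => ?_
    exact E2 p.1 p.2 (Finset.mem_offDiag.mp hp).2.2
  have hI2 : ∫ ω, S ω ^ 2 ∂P = ∑ p ∈ D, ∑ q ∈ D, ∫ ω, W p ω * W q ω ∂P := by
    simp only [hSsq]
    rw [integral_finset_sum _ (fun p _ => integrable_finset_sum _ fun q _ => hWWint p q)]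
    exact Finset.sum_congr rfl fun p _ => integral_finset_sum _ fun q _ => hWWint p q
  -- the bounding function
  set B : Fin n × Fin n → Fin n × Fin n → ℝ := fun p q =>
    (if q = p then 1 else 0) + (if q = (p.2, p.1) then 1 else 0)
      + (if q.1 = p.1 then m ^ 2 else 0) + (if q.1 = p.2 then m ^ 2 else 0)
      + (if q.2 = p.1 then m ^ 2 else 0) + (if q.2 = p.2 then m ^ 2 else 0) with hB
  have hBnonneg : ∀ p q, 0 ≤ B p q := by
    intro p q
    rw [hB]; dsimp only
    repeat' apply add_nonneg
    all_goals split_ifs <;> positivity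
  have hBsum : ∀ p : Fin n × Fin n, ∑ q : Fin n × Fin n, B p q = 2 + 4 * (n : ℝ) * m ^ 2 := by
    intro p
    rw [hB]; dsimp only
    simp only [Finset.sum_add_distrib]
    have t1 : ∑ q : Fin n × Fin n, (if q = p then (1:ℝ) else 0) = 1 := by
      simp [Finset.sum_ite_eq']
    have t2 : ∑ q : Fin n × Fin n, (if q = (p.2, p.1) then (1:ℝ) else 0) = 1 := by
      simp [Finset.sum_ite_eq']
    have t3 : ∀ x : Fin n, ∑ q : Fin n × Fin n, (if q.1 = x then m ^ 2 else 0)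
        = (n : ℝ) * m ^ 2 := by
      intro x
      rw [Fintype.sum_prod_type, Finset.sum_comm]
      simp [Finset.sum_ite_eq', Finset.sum_const, Finset.card_univ]
    have t4 : ∀ x : Fin n, ∑ q : Fin n × Fin n, (if q.2 = x then m ^ 2 else 0)
        = (n : ℝ) * m ^ 2 := by
      intro x
      rw [Fintype.sum_prod_type]
      simp [Finset.sum_ite_eq', Finset.sum_const, Finset.card_univ]
    rw [t1, t2, t3, t3, t4, t4]
    ring
  -- the per-term bound
  have hbound : ∀ p ∈ D, ∀ q ∈ D, (∫ ω, W p ω * W q ω ∂P) - m ^ 2 * m ^ 2 ≤ B p q := by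
    rintro ⟨x, y⟩ hp ⟨a, b⟩ hq
    have hxy : x ≠ y := (Finset.mem_offDiag.mp hp).2.2
    have hab : a ≠ b := (Finset.mem_offDiag.mp hq).2.2
    have hWW : ∀ ω, W (x, y) ω * W (a, b) ω = (Y x ω * Y y ω) * (Y a ω * Y b ω) := by
      intro ω; rw [hW]
    rcases eq_or_ne a x with hax | hax
    · subst hax
      rcases eq_or_ne b y with hby | hby
      · subst hby
        -- same pair : product = 1
        have hint : ∫ ω, W (a, b) ω * W (a, b) ω ∂P = 1 := by
          rw [show (fun ω => W (a, b) ω * W (a, b) ω) = fun _ => (1:ℝ) from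
            funext fun ω => by
              rw [hWW]
              linear_combination (Y b ω * Y b ω) * hsq a ω + hsq b ω]
          simp
        rw [hint]
        simp only [hB, Prod.mk.injEq]
        simp only [hxy, hab, Ne.symm hxy, Ne.symm hab, if_true, if_false, eq_self_iff_true,
          and_true, true_and, and_false, false_and, if_neg, ite_true, ite_false]
        norm_num
        nlinarith [sq_nonneg m, sq_nonneg (m * m)]
      · -- share a = x only
        have hint : ∫ ω, W (a, y) ω * W (a, b) ω ∂P = m ^ 2 := by
          rw [show (fun ω => W (a, y) ω * W (a, b) ω) = fun ω => Y y ω * Y b ω from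
            funext fun ω => by
              rw [hWW]
              linear_combination (Y y ω * Y b ω) * hsq a ω]
          exact E2 y b fun h => hby h.symm
        rw [hint]
        simp only [hB, Prod.mk.injEq]
        simp only [hxy, hab, hby, Ne.symm hxy, Ne.symm hab]
        norm_num
        nlinarith [sq_nonneg m, sq_nonneg (m * m)]
    · rcases eq_or_ne a y with hay | hay
      · subst hay
        rcases eq_or_ne b x with hbx | hbx
        · subst hbx
          -- swapped pair : product = 1
          have hint : ∫ ω, W (b, a) ω * W (a, b) ω ∂P = 1 := by
            rw [show (fun ω => W (b, a) ω * W (a, b) ω) = fun _ => (1:ℝ) from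
              funext fun ω => by
                rw [hWW]
                linear_combination (Y a ω * Y a ω) * hsq b ω + hsq a ω]
            simp
          rw [hint]
          simp only [hB, Prod.mk.injEq]
          simp only [hxy, hab, Ne.symm hxy, Ne.symm hab]
          norm_num
          nlinarith [sq_nonneg m, sq_nonneg (m * m)]
        · -- share a = y only
          have hint : ∫ ω, W (x, a) ω * W (a, b) ω ∂P = m ^ 2 := by
            rw [show (fun ω => W (x, a) ω * W (a, b) ω) = fun ω => Y x ω * Y b ω from
              funext fun ω => by
                rw [hWW]
                linear_combination (Y x ω * Y b ω) * hsq a ω]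
            exact E2 x b fun h => hbx h.symm
          rw [hint]
          simp only [hB, Prod.mk.injEq]
          simp only [hxy, hab, hbx, Ne.symm hxy, Ne.symm hab, Ne.symm hbx]
          norm_num
          nlinarith [sq_nonneg m, sq_nonneg (m * m)]
      · rcases eq_or_ne b x with hbx | hbx
        · subst hbx
          -- share b = x only
          have hint : ∫ ω, W (b, y) ω * W (a, b) ω ∂P = m ^ 2 := by
            rw [show (fun ω => W (b, y) ω * W (a, b) ω) = fun ω => Y y ω * Y a ω from
              funext fun ω => by
                rw [hWW]
                linear_combination (Y y ω * Y a ω) * hsq b ω]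
            exact E2 y a fun h => hay h.symm
          rw [hint]
          simp only [hB, Prod.mk.injEq]
          simp only [hxy, hab, hay, Ne.symm hxy, Ne.symm hab, Ne.symm hay]
          norm_num
          nlinarith [sq_nonneg m, sq_nonneg (m * m)]
        · rcases eq_or_ne b y with hby | hby
          · subst hby
            -- share b = y only
            have hint : ∫ ω, W (x, b) ω * W (a, b) ω ∂P = m ^ 2 := by
              rw [show (fun ω => W (x, b) ω * W (a, b) ω) = fun ω => Y x ω * Y a ω from
                funext fun ω => by
                  rw [hWW]
                  linear_combination (Y x ω * Y a ω) * hsq b ω]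
              exact E2 x a fun h => hax h.symm
            rw [hint]
            simp only [hB, Prod.mk.injEq]
            simp only [hxy, hab, hax, hay, Ne.symm hxy, Ne.symm hab, Ne.symm hax, Ne.symm hay]
            norm_num
            nlinarith [sq_nonneg m, sq_nonneg (m * m)]
          · -- all four distinct
            have hint : ∫ ω, W (x, y) ω * W (a, b) ω ∂P = m ^ 2 * m ^ 2 := by
              rw [show (fun ω => W (x, y) ω * W (a, b) ω)
                  = fun ω => (Y x ω * Y y ω) * (Y a ω * Y b ω) from funext fun ω => hWW ω]
              exact E4 x y a b hxy (fun h => hax h.symm) (fun h => hbx h.symm)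
                (fun h => hay h.symm) (fun h => hby h.symm) hab
            rw [hint]
            simp only [sub_self]
            exact hBnonneg _ _
  -- putting it together
  have hDcard : ((D.card : ℕ) : ℝ) = (n : ℝ) ^ 2 - n := by
    rw [hD, Finset.offDiag_card, Finset.card_univ, Fintype.card_fin]
    have hle : n ≤ n * n := Nat.le_mul_of_pos_left n (by omega)
    push_cast [Nat.cast_sub hle]
    ring
  have hmain : (∫ ω, S ω ^ 2 ∂P) - (∫ ω, S ω ∂P) ^ 2
      ≤ ((n : ℝ) ^ 2 - n) * (2 + 4 * (n : ℝ) * m ^ 2) := by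
    rw [hI1, hI2]
    have hsq' : (∑ p ∈ D, m ^ 2) ^ 2 = ∑ p ∈ D, ∑ q ∈ D, m ^ 2 * m ^ 2 := by
      rw [sq, Finset.sum_mul_sum]
    rw [hsq', ← Finset.sum_sub_distrib]
    simp only [← Finset.sum_sub_distrib]
    calc ∑ p ∈ D, ∑ q ∈ D, ((∫ ω, W p ω * W q ω ∂P) - m ^ 2 * m ^ 2)
        ≤ ∑ p ∈ D, (2 + 4 * (n : ℝ) * m ^ 2) := by
          refine Finset.sum_le_sum fun p hp => ?_
          calc ∑ q ∈ D, ((∫ ω, W p ω * W q ω ∂P) - m ^ 2 * m ^ 2)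
              ≤ ∑ q ∈ D, B p q := Finset.sum_le_sum fun q hq => hbound p hp q hq
            _ ≤ ∑ q : Fin n × Fin n, B p q :=
                Finset.sum_le_sum_of_subset_of_nonneg (Finset.subset_univ D)
                  (fun q _ _ => hBnonneg p q)
            _ = 2 + 4 * (n : ℝ) * m ^ 2 := hBsum p
      _ = ((n : ℝ) ^ 2 - n) * (2 + 4 * (n : ℝ) * m ^ 2) := by
          rw [Finset.sum_const, nsmul_eq_mul, hDcard]
  rw [hvar]
  have hm2 : (0:ℝ) ≤ m ^ 2 := sq_nonneg m
  calc ((∫ ω, S ω ^ 2 ∂P) - (∫ ω, S ω ∂P) ^ 2) / (n : ℝ) ^ 4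
      ≤ (((n : ℝ) ^ 2 - n) * (2 + 4 * (n : ℝ) * m ^ 2)) / (n : ℝ) ^ 4 := by
        gcongr
    _ ≤ (2 * (n : ℝ) ^ 2 + 4 * ((n : ℝ) - 1) * (n : ℝ) ^ 2 * m ^ 2) / (n : ℝ) ^ 4 := by
        gcongr ?_ / _
        nlinarith [hm2, hN, hNpos]
    _ = 2 / (n : ℝ) ^ 2 + 4 * ((n : ℝ) - 1) / (n : ℝ) ^ 2 * m ^ 2 := by
        field_simp

end Aux

set_option maxHeartbeats 2000000 in
/-- Product-distribution setup: `n ≥ 2` i.i.d. samples `X⁽ⁱ⁾ ∈ {-1,1}^d` from a product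
distribution with mean vector `μ ∈ [-1,1]^d`. The statistic `Z := ‖X̄‖₂²` of the empirical
mean `X̄_j := (1/n) ∑_i X⁽ⁱ⁾_j` satisfies `Var[Z] ≤ 2d/n² + (4(n-1)/n²) ‖μ‖₂²`. -/
theorem product_mean_test_variance
    {Ω : Type*} [MeasurableSpace Ω] (P : Measure Ω) [IsProbabilityMeasure P]
    (d n : ℕ) (hd : 2 ≤ d) (hn : 2 ≤ n)
    (X : Fin n → Fin d → Ω → ℝ) (hXmeas : ∀ i j, Measurable (X i j))
    (hXval : ∀ i j ω, X i j ω = 1 ∨ X i j ω = -1)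
    (hXindep : iIndepFun
      (fun (p : Fin n × Fin d) ω => X p.1 p.2 ω) P)
    (μ : Fin d → ℝ) (hμbound : ∀ j, μ j ∈ Set.Icc (-1 : ℝ) 1)
    (hXmean : ∀ i j, ∫ ω, X i j ω ∂P = μ j) :
    variance (fun ω => ∑ j : Fin d, ((1 / n : ℝ) * ∑ i : Fin n, X i j ω) ^ 2) P ≤
      2 * (d : ℝ) / n ^ 2 + (4 * ((n : ℝ) - 1) / n ^ 2) * ∑ j : Fin d, μ j ^ 2 := by
  have habs : ∀ i j ω, |X i j ω| ≤ 1 := fun i j ω => by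
    rcases hXval i j ω with h | h <;> rw [h] <;> norm_num
  -- product moments
  have hprodall : ∀ s : Finset (Fin n × Fin d),
      ∫ ω, ∏ p ∈ s, X p.1 p.2 ω ∂P = ∏ p ∈ s, μ p.2 := by
    intro s
    rw [int_prod_eq (fun p ω => X p.1 p.2 ω) (fun p => hXmeas p.1 p.2)
      (fun p ω => habs p.1 p.2 ω) hXindep s]
    exact Finset.prod_congr rfl fun p _ => hXmean p.1 p.2
  have hprodj : ∀ (j : Fin d) (s : Finset (Fin n)),
      ∫ ω, ∏ i ∈ s, X i j ω ∂P = μ j ^ s.card := by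
    intro j s
    have hinj : ∀ x ∈ s, ∀ y ∈ s, (fun i => (i, j)) x = (fun i => (i, j)) y → x = y := by
      intro x _ y _ h
      simpa using h
    have h := hprodall (s.image fun i => (i, j))
    simp only [Finset.prod_image hinj] at h
    rw [h]
    simp [Finset.prod_const]
  -- per-coordinate variance bound
  have hvarj : ∀ j : Fin d,
      variance (fun ω => ((1 / (n : ℝ)) * ∑ i : Fin n, X i j ω) ^ 2) P
        ≤ 2 / (n : ℝ) ^ 2 + 4 * ((n : ℝ) - 1) / (n : ℝ) ^ 2 * μ j ^ 2 :=
    fun j => coord_var_bound (P := P) n hn (fun i => X i j) (fun i => hXmeas i j)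
      (fun i ω => hXval i j ω) (μ j) (hprodj j)
  -- square-integrability
  have hmem2 : ∀ j : Fin d,
      MemLp (fun ω => ((1 / (n : ℝ)) * ∑ i : Fin n, X i j ω) ^ 2) 2 P := fun j =>
    memℒp2_of_bdd
      ((measurable_const.mul (Finset.measurable_sum _ fun i _ => hXmeas i j)).pow
        measurable_const)
      (fun ω => sq_mean_bdd (by omega) (fun i => X i j ω) (fun i => habs i j ω))
  -- independence across coordinates
  have hindepjj : ∀ j j' : Fin d, j ≠ j' →
      IndepFun (fun ω => ((1 / (n : ℝ)) * ∑ i : Fin n, X i j ω) ^ 2)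
        (fun ω => ((1 / (n : ℝ)) * ∑ i : Fin n, X i j' ω) ^ 2) P := by
    intro j j' hne
    have hdisj : Disjoint ((Finset.univ : Finset (Fin n)) ×ˢ ({j} : Finset (Fin d)))
        ((Finset.univ : Finset (Fin n)) ×ˢ ({j'} : Finset (Fin d))) := by
      rw [Finset.disjoint_left]
      rintro ⟨i, k⟩ hp hq
      simp only [Finset.mem_product, Finset.mem_singleton] at hp hq
      exact hne (by rw [← hp.2, hq.2])
    have base := hXindep.indepFun_finset _ _ hdisj (fun p => hXmeas p.1 p.2)
    have hmemT : ∀ (jj : Fin d) (i : Fin n),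
        (i, jj) ∈ (Finset.univ : Finset (Fin n)) ×ˢ ({jj} : Finset (Fin d)) := by
      intro jj i; simp
    have hφm : ∀ jj : Fin d, Measurable fun v :
        ({x // x ∈ (Finset.univ : Finset (Fin n)) ×ˢ ({jj} : Finset (Fin d))} → ℝ) =>
        ((1 / (n : ℝ)) * ∑ i : Fin n, v ⟨(i, jj), hmemT jj i⟩) ^ 2 := by
      intro jj
      apply Measurable.pow _ measurable_const
      apply Measurable.mul measurable_const
      exact Finset.measurable_sum Finset.univ (fun i _ => measurable_pi_apply _)
    have hcomp := base.comp (hφm j) (hφm j')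
    exact IndepFun.congr hcomp (ae_of_all _ fun a => rfl) (ae_of_all _ fun a => rfl)
  -- split the variance
  have hsplit : variance (fun ω => ∑ j : Fin d, ((1 / (n : ℝ)) * ∑ i : Fin n, X i j ω) ^ 2) P
      = ∑ j : Fin d, variance (fun ω => ((1 / (n : ℝ)) * ∑ i : Fin n, X i j ω) ^ 2) P := by
    have hfun : (fun ω => ∑ j : Fin d, ((1 / (n : ℝ)) * ∑ i : Fin n, X i j ω) ^ 2)
        = ∑ j : Fin d, (fun ω => ((1 / (n : ℝ)) * ∑ i : Fin n, X i j ω) ^ 2) := by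
      funext ω
      rw [Finset.sum_apply]
    rw [hfun]
    exact IndepFun.variance_sum (fun j _ => hmem2 j) (fun j _ j' _ hne => hindepjj j j' hne)
  rw [hsplit]
  calc ∑ j : Fin d, variance (fun ω => ((1 / (n : ℝ)) * ∑ i : Fin n, X i j ω) ^ 2) P
      ≤ ∑ j : Fin d, (2 / (n : ℝ) ^ 2 + 4 * ((n : ℝ) - 1) / (n : ℝ) ^ 2 * μ j ^ 2) :=
        Finset.sum_le_sum fun j _ => hvarj j
    _ = 2 * (d : ℝ) / n ^ 2 + (4 * ((n : ℝ) - 1) / n ^ 2) * ∑ j : Fin d, μ j ^ 2 := by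
        rw [Finset.sum_add_distrib, Finset.sum_const, Finset.card_univ, Fintype.card_fin,
          nsmul_eq_mul, ← Finset.mul_sum]
        ring
end

section
/- In the product-distribution setup, let γ ∈ (0, √d] and suppose n ≥ 50·√d/γ². If ‖μ‖₂ ≤ γ/2, then P(‖X̄‖₂² > d/n + γ²/2) ≤ 1/3. -/
set_option maxHeartbeats 1000000
open Finset MeasureTheory ProbabilityTheory

lemma pm_integrable_of_bound {Ω : Type*} [MeasurableSpace Ω] (P : Measure Ω)
    [IsProbabilityMeasure P] (f : Ω → ℝ) (C : ℝ) (hf : Measurable f)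
    (hb : ∀ ω, |f ω| ≤ C) : Integrable f P :=
  (integrable_const C).mono' hf.aestronglyMeasurable
    (Filter.Eventually.of_forall (by simpa using hb))

lemma pm_integral_prod {Ω ι : Type*} [MeasurableSpace Ω] (P : Measure Ω)
    [IsProbabilityMeasure P] (Y : ι → Ω → ℝ) (hmeas : ∀ p, Measurable (Y p))
    (hval : ∀ p ω, Y p ω = 1 ∨ Y p ω = -1)
    (hindep : iIndepFun Y P)
    (s : Finset ι) :
    ∫ ω, ∏ p ∈ s, Y p ω ∂P = ∏ p ∈ s, ∫ ω, Y p ω ∂P := by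
  classical
  have hfun : ∀ t : Finset ι, (fun ω => ∏ p ∈ t, Y p ω) = ∏ p ∈ t, Y p := by
    intro t; funext ω; simp
  have habs : ∀ (t : Finset ι) (ω : Ω), |∏ p ∈ t, Y p ω| = 1 := by
    intro t ω
    rw [Finset.abs_prod]
    exact Finset.prod_eq_one fun p _ => by rcases hval p ω with h | h <;> simp [h]
  have hmeasp : ∀ t : Finset ι, Measurable (fun ω => ∏ p ∈ t, Y p ω) := fun t =>
    Finset.measurable_prod _ fun p _ => hmeas p
  have hint : ∀ t : Finset ι, Integrable (fun ω => ∏ p ∈ t, Y p ω) P := fun t =>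
    pm_integrable_of_bound P _ 1 (hmeasp t) fun ω => (habs t ω).le
  induction s using Finset.induction_on with
  | empty => simp
  | insert _ _ ha ih =>
    rename_i a s
    simp only [Finset.prod_insert ha]
    have hind : IndepFun (fun ω => ∏ p ∈ s, Y p ω) (Y a) P := by
      rw [hfun s]
      exact hindep.indepFun_finsetProd_of_notMem hmeas ha
    have := hind.symm.integral_mul_eq_mul_integral
      (pm_integrable_of_bound P _ 1 (hmeas a) fun ω => by rcases hval a ω with h | h <;> simp [h]).aestronglyMeasurable
      (hint s).aestronglyMeasurable
    rw [← ih]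
    exact this

/-- Product-distribution setup with `γ ∈ (0, √d]` and `n ≥ 50 √d / γ²`: if `‖μ‖₂ ≤ γ/2`, then
`P(‖X̄‖₂² > d/n + γ²/2) ≤ 1/3`. -/
theorem product_mean_test_accept
    {Ω : Type*} [MeasurableSpace Ω] (P : Measure Ω) [IsProbabilityMeasure P]
    (d n : ℕ) (hd : 2 ≤ d) (hn : 2 ≤ n)
    (X : Fin n → Fin d → Ω → ℝ) (hXmeas : ∀ i j, Measurable (X i j))
    (hXval : ∀ i j ω, X i j ω = 1 ∨ X i j ω = -1)
    (hXindep : iIndepFun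
      (fun (p : Fin n × Fin d) ω => X p.1 p.2 ω) P)
    (μ : Fin d → ℝ) (hμbound : ∀ j, μ j ∈ Set.Icc (-1 : ℝ) 1)
    (hXmean : ∀ i j, ∫ ω, X i j ω ∂P = μ j)
    (γ : ℝ) (hγ0 : 0 < γ) (hγd : γ ≤ Real.sqrt d)
    (hnγ : (n : ℝ) ≥ 50 * Real.sqrt d / γ ^ 2)
    (hμsmall : Real.sqrt (∑ j : Fin d, μ j ^ 2) ≤ γ / 2) :
    P {ω | ∑ j : Fin d, ((1 / n : ℝ) * ∑ i : Fin n, X i j ω) ^ 2 > (d : ℝ) / n + γ ^ 2 / 2} ≤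
      1 / 3 := by
  classical
  have hn0 : (0:ℝ) < n := by positivity
  have hd0 : (0:ℝ) < d := by positivity
  set m2 : ℝ := ∑ j : Fin d, μ j ^ 2 with hm2def
  have hm2nonneg : 0 ≤ m2 := Finset.sum_nonneg fun j _ => sq_nonneg _
  have hm2 : m2 ≤ γ ^ 2 / 4 := by
    have h1 : Real.sqrt m2 ^ 2 = m2 := Real.sq_sqrt hm2nonneg
    nlinarith [Real.sqrt_nonneg m2, hμsmall]
  -- independence helpers
  set Y : Fin n × Fin d → Ω → ℝ := fun p ω => X p.1 p.2 ω with hYdef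
  have hYmeas : ∀ p, Measurable (Y p) := fun p => hXmeas p.1 p.2
  have hYval : ∀ p ω, Y p ω = 1 ∨ Y p ω = -1 := fun p ω => hXval p.1 p.2 ω
  have hYmean : ∀ p, ∫ ω, Y p ω ∂P = μ p.2 := fun p => hXmean p.1 p.2
  have hprod := pm_integral_prod P Y hYmeas hYval hXindep
  have int2 : ∀ (j : Fin d) (a b : Fin n), a ≠ b →
      ∫ ω, X a j ω * X b j ω ∂P = μ j * μ j := by
    intro j a b hab
    have hne : ((a, j) : Fin n × Fin d) ≠ (b, j) := by simp [hab]
    have h := hprod {(a, j), (b, j)}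
    rw [Finset.prod_pair hne] at h
    simp only [Finset.prod_pair hne] at h
    rw [show (fun ω => X a j ω * X b j ω) = fun ω => Y (a,j) ω * Y (b,j) ω from rfl]
    rw [h, hYmean, hYmean]
  have int4 : ∀ p1 p2 p3 p4 : Fin n × Fin d, p1 ≠ p2 → p1 ≠ p3 → p1 ≠ p4 → p2 ≠ p3 →
      p2 ≠ p4 → p3 ≠ p4 →
      ∫ ω, (Y p1 ω * Y p2 ω) * (Y p3 ω * Y p4 ω) ∂P = μ p1.2 * μ p2.2 * (μ p3.2 * μ p4.2) := by
    intro p1 p2 p3 p4 h12 h13 h14 h23 h24 h34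
    have h := hprod {p1, p2, p3, p4}
    rw [Finset.prod_insert (by simp [h12, h13, h14]),
      Finset.prod_insert (by simp [h23, h24]), Finset.prod_pair h34] at h
    simp only [Finset.prod_insert (show p1 ∉ ({p2, p3, p4} : Finset _) by simp [h12, h13, h14]),
      Finset.prod_insert (show p2 ∉ ({p3, p4} : Finset _) by simp [h23, h24]),
      Finset.prod_pair h34] at h
    have : (fun ω => (Y p1 ω * Y p2 ω) * (Y p3 ω * Y p4 ω)) =
        fun ω => Y p1 ω * (Y p2 ω * (Y p3 ω * Y p4 ω)) := by funext ω; ring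
    rw [this, h, hYmean, hYmean, hYmean, hYmean]
    ring
  -- the off-diagonal statistic
  set Q : Finset (Fin d × Fin n × Fin n) :=
    Finset.univ ×ˢ (Finset.univ : Finset (Fin n)).offDiag with hQdef
  set T : Fin d × Fin n × Fin n → Ω → ℝ := fun q ω => X q.2.1 q.1 ω * X q.2.2 q.1 ω with hTdef
  set V : Ω → ℝ := fun ω => ∑ q ∈ Q, T q ω with hVdef
  have hTmeas : ∀ q, Measurable (T q) := fun q => (hXmeas _ _).mul (hXmeas _ _)
  have hTabs : ∀ q ω, |T q ω| ≤ 1 := by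
    intro q ω
    rcases hXval q.2.1 q.1 ω with h | h <;> rcases hXval q.2.2 q.1 ω with h' | h' <;>
      simp [hTdef, h, h']
  have hTTint : ∀ q r, Integrable (fun ω => T q ω * T r ω) P := by
    intro q r
    refine pm_integrable_of_bound P _ 1 ((hTmeas q).mul (hTmeas r)) fun ω => ?_
    rw [abs_mul]
    nlinarith [hTabs q ω, hTabs r ω, abs_nonneg (T q ω), abs_nonneg (T r ω)]
  have hVmeas : Measurable V := Finset.measurable_sum _ fun q _ => hTmeas q
  have hVabs : ∀ ω, |V ω| ≤ (Q.card : ℝ) := by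
    intro ω
    calc |V ω| ≤ ∑ q ∈ Q, |T q ω| := Finset.abs_sum_le_sum_abs _ _
      _ ≤ ∑ _q ∈ Q, (1:ℝ) := Finset.sum_le_sum fun q _ => hTabs q ω
      _ = Q.card := by simp
  have hV2int : Integrable (fun ω => V ω ^ 2) P := by
    refine pm_integrable_of_bound P _ ((Q.card : ℝ) ^ 2) (hVmeas.pow_const 2) fun ω => ?_
    rw [abs_pow]
    have := hVabs ω
    nlinarith [abs_nonneg (V ω)]
  -- pointwise identity
  have sq1 : ∀ (i : Fin n) (j : Fin d) (ω : Ω), X i j ω * X i j ω = 1 := by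
    intro i j ω; rcases hXval i j ω with h | h <;> rw [h] <;> norm_num
  have hpt : ∀ ω, ∑ j : Fin d, ((1 / n : ℝ) * ∑ i : Fin n, X i j ω) ^ 2
      = (d : ℝ) / n + V ω / (n:ℝ) ^ 2 := by
    intro ω
    have hA : ∀ j : Fin d, (∑ i : Fin n, X i j ω) ^ 2
        = (n : ℝ) + ∑ p ∈ (Finset.univ : Finset (Fin n)).offDiag, X p.1 j ω * X p.2 j ω := by
      intro j
      have e1 : (∑ i : Fin n, X i j ω) ^ 2
          = ∑ p ∈ (Finset.univ ×ˢ Finset.univ : Finset (Fin n × Fin n)),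
              X p.1 j ω * X p.2 j ω := by
        rw [sq, Finset.sum_mul_sum, ← Finset.sum_product']
      have hdiag : ((Finset.univ : Finset (Fin n)).diag)
          = Finset.univ.image (fun a => (a, a)) := by
        ext ⟨a, b⟩
        simp only [Finset.mem_diag, Finset.mem_image, Finset.mem_univ, true_and,
          Prod.mk.injEq]
        constructor
        · rintro rfl; exact ⟨a, rfl, rfl⟩
        · rintro ⟨x, rfl, rfl⟩; rfl
      have e3 : ∑ p ∈ (Finset.univ : Finset (Fin n)).diag, X p.1 j ω * X p.2 j ω = (n : ℝ) := by
        rw [hdiag, Finset.sum_image (fun x _ y _ h => (Prod.mk.injEq _ _ _ _).mp h |>.1)]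
        rw [Finset.sum_congr rfl (fun a _ => sq1 a j ω)]
        simp
      have e2 : ∑ p ∈ (Finset.univ ×ˢ Finset.univ : Finset (Fin n × Fin n)),
          X p.1 j ω * X p.2 j ω
          = ∑ p ∈ (Finset.univ : Finset (Fin n)).diag, X p.1 j ω * X p.2 j ω
            + ∑ p ∈ (Finset.univ : Finset (Fin n)).offDiag, X p.1 j ω * X p.2 j ω := by
        rw [← Finset.diag_union_offDiag, Finset.sum_union (Finset.disjoint_diag_offDiag _)]
      rw [e1, e2, e3]
    have hVω : V ω = ∑ j : Fin d, ∑ p ∈ (Finset.univ : Finset (Fin n)).offDiag,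
        X p.1 j ω * X p.2 j ω := by
      calc V ω = ∑ q ∈ (Finset.univ : Finset (Fin d)) ×ˢ (Finset.univ : Finset (Fin n)).offDiag,
            T q ω := rfl
        _ = ∑ j : Fin d, ∑ p ∈ (Finset.univ : Finset (Fin n)).offDiag, T (j, p) ω :=
            Finset.sum_product _ _ _
        _ = _ := rfl
    have main : ∑ j : Fin d, ((1 / n : ℝ) * ∑ i : Fin n, X i j ω) ^ 2
        = ∑ j : Fin d, ((n : ℝ) + ∑ p ∈ (Finset.univ : Finset (Fin n)).offDiag,
            X p.1 j ω * X p.2 j ω) * (1 / (n:ℝ)^2) := by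
      refine Finset.sum_congr rfl fun j _ => ?_
      rw [← hA j]
      field_simp
    rw [main, ← Finset.sum_mul, Finset.sum_add_distrib, Finset.sum_const, Finset.card_univ,
      Fintype.card_fin, ← hVω, nsmul_eq_mul]
    field_simp
  -- second moment expansion
  have hV2 : ∫ ω, V ω ^ 2 ∂P = ∑ z ∈ Q ×ˢ Q, ∫ ω, T z.1 ω * T z.2 ω ∂P := by
    have hpt2 : ∀ ω, V ω ^ 2 = ∑ z ∈ Q ×ˢ Q, T z.1 ω * T z.2 ω := by
      intro ω
      rw [sq, hVdef]
      rw [Finset.sum_mul_sum]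
      rw [← Finset.sum_product']
    simp only [hpt2]
    exact integral_finset_sum _ fun z _ => hTTint z.1 z.2
  -- per-term bound
  have hterm : ∀ z ∈ Q ×ˢ Q, ∫ ω, T z.1 ω * T z.2 ω ∂P ≤
      μ z.1.1 ^ 2 * μ z.2.1 ^ 2
      + (if z.1.1 = z.2.1 ∧ (z.1.2.1 = z.2.2.1 ∨ z.1.2.1 = z.2.2.2 ∨ z.1.2.2 = z.2.2.1 ∨
          z.1.2.2 = z.2.2.2) then μ z.1.1 ^ 2 else 0)
      + (if z.1.1 = z.2.1 ∧ (z.1.2 = z.2.2 ∨ z.1.2 = (z.2.2.2, z.2.2.1)) then 1 else 0) := by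
    rintro ⟨⟨j, i, k⟩, ⟨j', i', k'⟩⟩ hz
    rw [hQdef] at hz
    simp only [Finset.mem_product, Finset.mem_offDiag, Finset.mem_univ, true_and] at hz
    obtain ⟨hik, hik'⟩ := hz
    simp only [hTdef]
    by_cases hjj : j = j'
    · subst hjj
      by_cases b1 : i = i'
      · by_cases b4 : k = k'
        · -- full match
          have hred : ∀ ω, (X i j ω * X k j ω) * (X i' j ω * X k' j ω) = 1 := by
            intro ω; rw [← b1, ← b4]
            rcases hXval i j ω with h | h <;> rcases hXval k j ω with h' | h' <;>
              rw [h, h'] <;> ring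
          have hI : ∫ ω, (X i j ω * X k j ω) * (X i' j ω * X k' j ω) ∂P = 1 := by
            simp only [hred]; simp
          rw [hI, if_pos ⟨rfl, Or.inl b1⟩,
            if_pos ⟨rfl, Or.inl (show ((i,k) : Fin n × Fin n) = (i',k') by rw [b1, b4])⟩]
          nlinarith [sq_nonneg (μ j), sq_nonneg (μ j ^ 2)]
        · -- i = i' only
          have hred : ∀ ω, (X i j ω * X k j ω) * (X i' j ω * X k' j ω)
              = X k j ω * X k' j ω := by
            intro ω; rw [← b1]
            rcases hXval i j ω with h | h <;> rw [h] <;> ring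
          have hI : ∫ ω, (X i j ω * X k j ω) * (X i' j ω * X k' j ω) ∂P = μ j * μ j := by
            simp only [hred]; exact int2 j k k' b4
          have hf : ¬ (j = j ∧ (((i,k) : Fin n × Fin n) = (i',k') ∨ (i,k) = (k',i'))) := by
            rintro ⟨-, h | h⟩ <;> rw [Prod.mk.injEq] at h
            · exact b4 h.2
            · exact hik' (by rw [← b1]; exact h.1)
          rw [hI, if_pos ⟨rfl, Or.inl b1⟩, if_neg hf]
          nlinarith [sq_nonneg (μ j ^ 2), sq_nonneg (μ j)]
      · by_cases b2 : i = k'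
        · by_cases b3 : k = i'
          · -- full swapped match
            have hred : ∀ ω, (X i j ω * X k j ω) * (X i' j ω * X k' j ω) = 1 := by
              intro ω; rw [← b2, ← b3]
              rcases hXval i j ω with h | h <;> rcases hXval k j ω with h' | h' <;>
                rw [h, h'] <;> ring
            have hI : ∫ ω, (X i j ω * X k j ω) * (X i' j ω * X k' j ω) ∂P = 1 := by
              simp only [hred]; simp
            rw [hI, if_pos ⟨rfl, Or.inr (Or.inl b2)⟩,
              if_pos ⟨rfl, Or.inr (show ((i,k) : Fin n × Fin n) = (k',i') by rw [b2, b3])⟩]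
            nlinarith [sq_nonneg (μ j), sq_nonneg (μ j ^ 2)]
          · -- i = k' only
            have hred : ∀ ω, (X i j ω * X k j ω) * (X i' j ω * X k' j ω)
                = X k j ω * X i' j ω := by
              intro ω; rw [← b2]
              rcases hXval i j ω with h | h <;> rw [h] <;> ring
            have hI : ∫ ω, (X i j ω * X k j ω) * (X i' j ω * X k' j ω) ∂P = μ j * μ j := by
              simp only [hred]; exact int2 j k i' b3
            have hf : ¬ (j = j ∧ (((i,k) : Fin n × Fin n) = (i',k') ∨ (i,k) = (k',i'))) := by
              rintro ⟨-, h | h⟩ <;> rw [Prod.mk.injEq] at h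
              · exact b1 h.1
              · exact b3 h.2
            rw [hI, if_pos ⟨rfl, Or.inr (Or.inl b2)⟩, if_neg hf]
            nlinarith [sq_nonneg (μ j ^ 2), sq_nonneg (μ j)]
        · by_cases b3 : k = i'
          · -- k = i' only
            have hred : ∀ ω, (X i j ω * X k j ω) * (X i' j ω * X k' j ω)
                = X i j ω * X k' j ω := by
              intro ω; rw [← b3]
              rcases hXval k j ω with h | h <;> rw [h] <;> ring
            have hI : ∫ ω, (X i j ω * X k j ω) * (X i' j ω * X k' j ω) ∂P = μ j * μ j := by
              simp only [hred]; exact int2 j i k' b2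
            have hf : ¬ (j = j ∧ (((i,k) : Fin n × Fin n) = (i',k') ∨ (i,k) = (k',i'))) := by
              rintro ⟨-, h | h⟩ <;> rw [Prod.mk.injEq] at h
              · exact b1 h.1
              · exact b2 h.1
            rw [hI, if_pos ⟨rfl, Or.inr (Or.inr (Or.inl b3))⟩, if_neg hf]
            nlinarith [sq_nonneg (μ j ^ 2), sq_nonneg (μ j)]
          · by_cases b4 : k = k'
            · -- k = k' only
              have hred : ∀ ω, (X i j ω * X k j ω) * (X i' j ω * X k' j ω)
                  = X i j ω * X i' j ω := by
                intro ω; rw [← b4]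
                rcases hXval k j ω with h | h <;> rw [h] <;> ring
              have hI : ∫ ω, (X i j ω * X k j ω) * (X i' j ω * X k' j ω) ∂P = μ j * μ j := by
                simp only [hred]; exact int2 j i i' b1
              have hf : ¬ (j = j ∧ (((i,k) : Fin n × Fin n) = (i',k') ∨ (i,k) = (k',i'))) := by
                rintro ⟨-, h | h⟩ <;> rw [Prod.mk.injEq] at h
                · exact b1 h.1
                · exact b2 h.1
              rw [hI, if_pos ⟨rfl, Or.inr (Or.inr (Or.inr b4))⟩, if_neg hf]
              nlinarith [sq_nonneg (μ j ^ 2), sq_nonneg (μ j)]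
            · -- all distinct
              have hI := int4 (i, j) (k, j) (i', j) (k', j)
                (by simp [hik]) (by simp [b1]) (by simp [b2]) (by simp [b3]) (by simp [b4])
                (by simp [hik'])
              have hs : ¬ (j = j ∧ (i = i' ∨ i = k' ∨ k = i' ∨ k = k')) := by
                rintro ⟨-, h | h | h | h⟩
                exacts [b1 h, b2 h, b3 h, b4 h]
              have hf : ¬ (j = j ∧ (((i,k) : Fin n × Fin n) = (i',k') ∨ (i,k) = (k',i'))) := by
                rintro ⟨-, h | h⟩ <;> rw [Prod.mk.injEq] at h
                · exact b1 h.1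
                · exact b2 h.1
              rw [if_neg hs, if_neg hf]
              have hI' : ∫ ω, (X i j ω * X k j ω) * (X i' j ω * X k' j ω) ∂P
                  = μ j * μ j * (μ j * μ j) := hI
              rw [hI']
              nlinarith []
    · -- j ≠ j'
      have hI := int4 (i, j) (k, j) (i', j') (k', j')
        (by simp [hik]) (by simp [hjj]) (by simp [hjj]) (by simp [hjj]) (by simp [hjj])
        (by simp [hik'])
      have hI' : ∫ ω, (X i j ω * X k j ω) * (X i' j' ω * X k' j' ω) ∂P
          = μ j * μ j * (μ j' * μ j') := hI
      rw [if_neg (fun h => hjj h.1), if_neg (fun h => hjj h.1), hI']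
      nlinarith []
  -- summing the bound
  have hsumbound : ∑ z ∈ Q ×ˢ Q, (μ z.1.1 ^ 2 * μ z.2.1 ^ 2
      + (if z.1.1 = z.2.1 ∧ (z.1.2.1 = z.2.2.1 ∨ z.1.2.1 = z.2.2.2 ∨ z.1.2.2 = z.2.2.1 ∨
          z.1.2.2 = z.2.2.2) then μ z.1.1 ^ 2 else 0)
      + (if z.1.1 = z.2.1 ∧ (z.1.2 = z.2.2 ∨ z.1.2 = (z.2.2.2, z.2.2.1)) then 1 else 0))
      ≤ (n:ℝ)^4 * m2^2 + 4*(n:ℝ)^3 * m2 + 2*(n:ℝ)^2*d := by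
    have hcard_off : (((Finset.univ : Finset (Fin n)).offDiag.card : ℕ) : ℝ) ≤ (n:ℝ)^2 := by
      rw [Finset.offDiag_card]
      calc (((Finset.univ.card * Finset.univ.card - Finset.univ.card : ℕ)) : ℝ)
          ≤ ((Finset.univ.card * Finset.univ.card : ℕ) : ℝ) := by
            exact_mod_cast Nat.sub_le _ _
        _ = (n:ℝ)^2 := by simp [Finset.card_univ]; ring
    have hcard_nonneg : (0:ℝ) ≤ (((Finset.univ : Finset (Fin n)).offDiag.card : ℕ) : ℝ) := by
      positivity
    have hQsum : ∑ q ∈ Q, μ q.1 ^ 2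
        = (((Finset.univ : Finset (Fin n)).offDiag.card : ℕ) : ℝ) * m2 := by
      rw [hQdef, Finset.sum_product]
      simp only [Finset.sum_const, nsmul_eq_mul]
      rw [← Finset.mul_sum]
    rw [Finset.sum_add_distrib, Finset.sum_add_distrib]
    have hS1 : ∑ z ∈ Q ×ˢ Q, μ z.1.1 ^ 2 * μ z.2.1 ^ 2 ≤ (n:ℝ)^4 * m2^2 := by
      have e : ∑ z ∈ Q ×ˢ Q, μ z.1.1 ^ 2 * μ z.2.1 ^ 2
          = (∑ q ∈ Q, μ q.1 ^ 2) * (∑ q ∈ Q, μ q.1 ^ 2) := by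
        rw [Finset.sum_product]
        dsimp only
        rw [← Finset.sum_mul_sum]
      rw [e, hQsum]
      have h1 : (((Finset.univ : Finset (Fin n)).offDiag.card : ℕ) : ℝ)
          * (((Finset.univ : Finset (Fin n)).offDiag.card : ℕ) : ℝ) ≤ (n:ℝ)^2 * (n:ℝ)^2 :=
        mul_le_mul hcard_off hcard_off hcard_nonneg (by positivity)
      nlinarith [mul_le_mul_of_nonneg_right h1 (mul_nonneg hm2nonneg hm2nonneg)]
    have hS2 : ∑ z ∈ Q ×ˢ Q, (if z.1.1 = z.2.1 ∧ (z.1.2.1 = z.2.2.1 ∨ z.1.2.1 = z.2.2.2 ∨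
        z.1.2.2 = z.2.2.1 ∨ z.1.2.2 = z.2.2.2) then μ z.1.1 ^ 2 else 0)
        ≤ 4*(n:ℝ)^3 * m2 := by
      rw [Finset.sum_product]
      have inner : ∀ q ∈ Q, ∑ r ∈ Q, (if q.1 = r.1 ∧ (q.2.1 = r.2.1 ∨ q.2.1 = r.2.2 ∨
          q.2.2 = r.2.1 ∨ q.2.2 = r.2.2) then μ q.1 ^ 2 else 0) ≤ 4*(n:ℝ) * μ q.1 ^ 2 := by
        intro q _
        rw [← Finset.sum_filter]
        rw [Finset.sum_const, nsmul_eq_mul]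
        have hsub : Q.filter (fun r => q.1 = r.1 ∧ (q.2.1 = r.2.1 ∨ q.2.1 = r.2.2 ∨
            q.2.2 = r.2.1 ∨ q.2.2 = r.2.2)) ⊆
            ({q.1} : Finset (Fin d)) ×ˢ
              ((({q.2.1, q.2.2} : Finset (Fin n)) ×ˢ (Finset.univ : Finset (Fin n)))
                ∪ ((Finset.univ : Finset (Fin n)) ×ˢ ({q.2.1, q.2.2} : Finset (Fin n)))) := by
          intro r hr
          simp only [Finset.mem_filter] at hr
          obtain ⟨-, h1, h2⟩ := hr
          simp only [Finset.mem_product, Finset.mem_singleton, Finset.mem_union,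
            Finset.mem_insert, Finset.mem_univ, and_true, true_and]
          refine ⟨h1.symm, ?_⟩
          rcases h2 with h | h | h | h
          · exact Or.inl (Or.inl h.symm)
          · exact Or.inr (Or.inl h.symm)
          · exact Or.inl (Or.inr h.symm)
          · exact Or.inr (Or.inr h.symm)
        have hcardn : (Q.filter (fun r => q.1 = r.1 ∧ (q.2.1 = r.2.1 ∨ q.2.1 = r.2.2 ∨
            q.2.2 = r.2.1 ∨ q.2.2 = r.2.2))).card ≤ 4 * n := by
          refine (Finset.card_le_card hsub).trans ?_
          rw [Finset.card_product, Finset.card_singleton, one_mul]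
          refine (Finset.card_union_le _ _).trans ?_
          rw [Finset.card_product, Finset.card_product, Finset.card_univ, Fintype.card_fin]
          have h2c : ({q.2.1, q.2.2} : Finset (Fin n)).card ≤ 2 := Finset.card_le_two
          nlinarith [h2c]
        have : ((Q.filter (fun r => q.1 = r.1 ∧ (q.2.1 = r.2.1 ∨ q.2.1 = r.2.2 ∨
            q.2.2 = r.2.1 ∨ q.2.2 = r.2.2))).card : ℝ) ≤ 4 * (n:ℝ) := by
          exact_mod_cast hcardn
        exact mul_le_mul_of_nonneg_right this (sq_nonneg _)
      calc ∑ q ∈ Q, ∑ r ∈ Q, (if q.1 = r.1 ∧ (q.2.1 = r.2.1 ∨ q.2.1 = r.2.2 ∨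
            q.2.2 = r.2.1 ∨ q.2.2 = r.2.2) then μ q.1 ^ 2 else 0)
          ≤ ∑ q ∈ Q, 4*(n:ℝ) * μ q.1 ^ 2 := Finset.sum_le_sum inner
        _ = 4*(n:ℝ) * ∑ q ∈ Q, μ q.1 ^ 2 := by rw [Finset.mul_sum]
        _ ≤ 4*(n:ℝ)^3 * m2 := by
            rw [hQsum]
            nlinarith [mul_le_mul_of_nonneg_left
              (mul_le_mul_of_nonneg_right hcard_off hm2nonneg)
              (show (0:ℝ) ≤ 4*(n:ℝ) by positivity)]
    have hS3 : ∑ z ∈ Q ×ˢ Q, (if z.1.1 = z.2.1 ∧ (z.1.2 = z.2.2 ∨ z.1.2 = (z.2.2.2, z.2.2.1))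
        then (1:ℝ) else 0) ≤ 2*(n:ℝ)^2*d := by
      rw [Finset.sum_product]
      have inner : ∀ q ∈ Q, ∑ r ∈ Q, (if q.1 = r.1 ∧ (q.2 = r.2 ∨ q.2 = (r.2.2, r.2.1))
          then (1:ℝ) else 0) ≤ 2 := by
        intro q _
        rw [← Finset.sum_filter, Finset.sum_const, nsmul_eq_mul, mul_one]
        have hsub : Q.filter (fun r => q.1 = r.1 ∧ (q.2 = r.2 ∨ q.2 = (r.2.2, r.2.1))) ⊆
            ({(q.1, q.2), (q.1, q.2.2, q.2.1)} : Finset (Fin d × Fin n × Fin n)) := by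
          intro r hr
          simp only [Finset.mem_filter] at hr
          obtain ⟨-, h1, h2⟩ := hr
          simp only [Finset.mem_insert, Finset.mem_singleton]
          rcases h2 with h | h
          · left
            rw [Prod.ext_iff]
            exact ⟨h1.symm, h.symm⟩
          · right
            rw [Prod.ext_iff]
            refine ⟨h1.symm, ?_⟩
            rw [Prod.ext_iff] at h ⊢
            exact ⟨h.2.symm, h.1.symm⟩
        have : (Q.filter (fun r => q.1 = r.1 ∧ (q.2 = r.2 ∨ q.2 = (r.2.2, r.2.1)))).card ≤ 2 :=
          (Finset.card_le_card hsub).trans Finset.card_le_two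
        exact_mod_cast this
      calc ∑ q ∈ Q, ∑ r ∈ Q, (if q.1 = r.1 ∧ (q.2 = r.2 ∨ q.2 = (r.2.2, r.2.1))
            then (1:ℝ) else 0) ≤ ∑ _q ∈ Q, (2:ℝ) := Finset.sum_le_sum inner
        _ = 2 * (Q.card : ℝ) := by rw [Finset.sum_const, nsmul_eq_mul]; ring
        _ ≤ 2*(n:ℝ)^2*d := by
            have : (Q.card : ℝ) = (d:ℝ) * (((Finset.univ : Finset (Fin n)).offDiag.card : ℕ) : ℝ) := by
              rw [hQdef, Finset.card_product, Finset.card_univ, Fintype.card_fin]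
              push_cast
              ring
            rw [this]
            nlinarith [hcard_off, hd0]
    linarith [hS1, hS2, hS3]
  -- numeric bound
  set t : ℝ := (n:ℝ)^2 * γ^2 / 2 with htdef
  have ht : 0 < t := by positivity
  have hEV2 : ∫ ω, V ω ^ 2 ∂P ≤ t^2 / 3 := by
    have h1 : ∫ ω, V ω ^ 2 ∂P ≤ (n:ℝ)^4 * m2^2 + 4*(n:ℝ)^3 * m2 + 2*(n:ℝ)^2*d := by
      rw [hV2]; exact (Finset.sum_le_sum hterm).trans hsumbound
    have hsd2 : Real.sqrt d ^ 2 = d := Real.sq_sqrt hd0.le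
    have hsd1 : (1:ℝ) ≤ Real.sqrt d := by
      rw [show (1:ℝ) = Real.sqrt 1 by simp]
      exact Real.sqrt_le_sqrt (by exact_mod_cast Nat.one_le_of_lt hd)
    have hng : 50 * Real.sqrt d ≤ (n:ℝ) * γ^2 := by
      rw [ge_iff_le, div_le_iff₀ (by positivity)] at hnγ
      linarith
    have h50 : (50:ℝ) ≤ (n:ℝ) * γ^2 := by nlinarith
    have h2500 : 2500 * (d:ℝ) ≤ ((n:ℝ) * γ^2)^2 := by nlinarith [Real.sqrt_nonneg (d:ℝ)]
    have e1 : (n:ℝ)^4 * m2^2 ≤ (n:ℝ)^4 * (γ^2/4)^2 :=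
      mul_le_mul_of_nonneg_left (pow_le_pow_left₀ hm2nonneg hm2 2) (by positivity)
    have e2 : 4*(n:ℝ)^3 * m2 ≤ (n:ℝ)^3 * γ^2 := by
      have := mul_le_mul_of_nonneg_left hm2 (show (0:ℝ) ≤ 4*(n:ℝ)^3 by positivity)
      nlinarith []
    have e3 : 50 * ((n:ℝ)^3 * γ^2) ≤ (n:ℝ)^4 * γ^4 := by
      have := mul_le_mul_of_nonneg_right h50 (show (0:ℝ) ≤ (n:ℝ)^3 * γ^2 by positivity)
      nlinarith []
    have e4 : 2500 * (2*(n:ℝ)^2*d) ≤ 2 * ((n:ℝ)^4 * γ^4) := by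
      have := mul_le_mul_of_nonneg_left h2500 (show (0:ℝ) ≤ 2*(n:ℝ)^2 by positivity)
      nlinarith []
    have ht2 : t^2 = (n:ℝ)^4 * γ^4 / 4 := by rw [htdef]; ring
    rw [ht2]
    nlinarith [h1, e1, e2, e3, e4, pow_pos hn0 4, pow_pos hγ0 4]
  -- Markov
  have hsub : {ω | ∑ j : Fin d, ((1 / n : ℝ) * ∑ i : Fin n, X i j ω) ^ 2
      > (d : ℝ) / n + γ ^ 2 / 2} ⊆ {ω | t^2 ≤ V ω ^ 2} := by
    intro ω hω
    simp only [Set.mem_setOf_eq] at hω ⊢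
    rw [hpt ω] at hω
    have h1 : γ^2/2 < V ω / (n:ℝ)^2 := by linarith
    have h2 : γ^2/2 * (n:ℝ)^2 < V ω := (lt_div_iff₀ (by positivity)).mp h1
    have h3 : t < V ω := by rw [htdef]; linarith
    nlinarith [ht, h3]
  have hPS := mul_meas_ge_le_integral_of_nonneg
    (μ := P) (f := fun ω => V ω ^ 2)
    (Filter.Eventually.of_forall fun ω => sq_nonneg (V ω)) hV2int (t^2)
  have hPSr : (P {ω | t^2 ≤ V ω ^ 2}).toReal ≤ 1/3 := by
    have h4 : t^2 * (P {ω | t^2 ≤ V ω ^ 2}).toReal ≤ t^2 * (1/3) := by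
      calc t^2 * (P {ω | t^2 ≤ V ω ^ 2}).toReal ≤ ∫ ω, V ω ^ 2 ∂P := hPS
        _ ≤ t^2/3 := hEV2
        _ = t^2 * (1/3) := by ring
    exact le_of_mul_le_mul_left h4 (by positivity)
  calc P {ω | ∑ j : Fin d, ((1 / n : ℝ) * ∑ i : Fin n, X i j ω) ^ 2
        > (d : ℝ) / n + γ ^ 2 / 2} ≤ P {ω | t^2 ≤ V ω ^ 2} := measure_mono hsub
    _ ≤ 1/3 := by
        rw [← ENNReal.ofReal_toReal (measure_ne_top P _)]
        calc ENNReal.ofReal (P {ω | t^2 ≤ V ω ^ 2}).toReal ≤ ENNReal.ofReal (1/3) :=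
              ENNReal.ofReal_le_ofReal hPSr
          _ = 1/3 := by
              rw [show (1:ℝ)/3 = (3:ℝ)⁻¹ by norm_num, ENNReal.ofReal_inv_of_pos (by norm_num)]
              norm_num
end

section
/- Let n ≥ 2 be an integer, μ ∈ [−1, 1], and N ~ Binomial(n, (1 + μ)/2). Then Var[(N − n/2)²] = n(n − 1)/8 + (n(n − 1)(n − 2)/4)·μ² − (n(n − 1)(2n − 3)/8)·μ⁴. In particular, Var[(N − n/2)²] ≤ n(n − 1)/8 + (n(n − 1)(n − 2)/4)·μ². -/
open Finset

/-- Expectation `E[g(N)]` for `N ~ Binomial(n, q)`. -/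
noncomputable def binomialExpect (n : ℕ) (q : ℝ) (g : ℕ → ℝ) : ℝ :=
  ∑ x ∈ Finset.range (n + 1), (n.choose x : ℝ) * q ^ x * (1 - q) ^ (n - x) * g x

/-- Variance `Var[g(N)] = E[g(N)²] - (E[g(N)])²` for `N ~ Binomial(n, q)`. -/
noncomputable def binomialVar (n : ℕ) (q : ℝ) (g : ℕ → ℝ) : ℝ :=
  binomialExpect n q (fun x => g x ^ 2) - (binomialExpect n q g) ^ 2

lemma cast_desc (x k : ℕ) : (x.descFactorial k : ℝ) = ∏ i ∈ range k, ((x : ℝ) - i) := by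
  rcases le_or_gt k x with h | h
  · induction k with
    | zero => simp
    | succ k ih =>
      rw [Nat.descFactorial_succ, prod_range_succ, Nat.cast_mul,
        ih (le_of_lt h), Nat.cast_sub (le_of_lt h)]
      ring
  · rw [Nat.descFactorial_eq_zero_iff_lt.2 h, eq_comm, Nat.cast_zero]
    apply Finset.prod_eq_zero (mem_range.2 h)
    ring

open Nat in
lemma desc_mul_choose (n k j : ℕ) :
    (k + j).descFactorial k * n.choose (k + j) = n.descFactorial k * (n - k).choose j := by
  rcases le_or_gt (k + j) n with h | h
  · have hk : k ≤ n := le_trans (Nat.le_add_right _ _) h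
    have h1 : j ! * (k + j).descFactorial k = (k + j)! := by
      have := Nat.factorial_mul_descFactorial (Nat.le_add_right k j)
      simpa [Nat.add_sub_cancel_left] using this
    have h2 : n.choose (k + j) * (k + j)! * (n - (k + j))! = n ! :=
      Nat.choose_mul_factorial_mul_factorial h
    have h3 : (n - k)! * n.descFactorial k = n ! := Nat.factorial_mul_descFactorial hk
    have h4 : (n - k).choose j * j ! * ((n - k) - j)! = (n - k)! :=
      Nat.choose_mul_factorial_mul_factorial (by omega)
    have key1 : j ! * (n - (k + j))! * ((k + j).descFactorial k * n.choose (k + j)) = n ! := by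
      rw [show j ! * (n - (k + j))! * ((k + j).descFactorial k * n.choose (k + j))
          = n.choose (k + j) * (j ! * (k + j).descFactorial k) * (n - (k + j))! from by ring,
        h1]
      exact h2
    have key2 : j ! * (n - (k + j))! * (n.descFactorial k * (n - k).choose j) = n ! := by
      have he : n - (k + j) = (n - k) - j := by omega
      rw [he, show j ! * ((n - k) - j)! * (n.descFactorial k * (n - k).choose j)
          = ((n - k).choose j * j ! * ((n - k) - j)!) * n.descFactorial k from by ring,
        h4]
      exact h3
    exact Nat.eq_of_mul_eq_mul_left
      (Nat.mul_pos (Nat.factorial_pos j) (Nat.factorial_pos _)) (key1.trans key2.symm)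
  · rw [Nat.choose_eq_zero_of_lt h, Nat.mul_zero]
    rcases le_or_gt k n with hk | hk
    · rw [Nat.choose_eq_zero_of_lt (by omega), Nat.mul_zero]
    · rw [Nat.descFactorial_eq_zero_iff_lt.2 hk, Nat.zero_mul]

lemma pmf_sum (n : ℕ) (q : ℝ) :
    ∑ x ∈ range (n + 1), (n.choose x : ℝ) * q ^ x * (1 - q) ^ (n - x) = 1 := by
  have h := add_pow q (1 - q) n
  have h1 : ((q + (1 - q)) : ℝ) ^ n = 1 := by norm_num
  rw [h1] at h
  calc ∑ x ∈ range (n + 1), (n.choose x : ℝ) * q ^ x * (1 - q) ^ (n - x)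
      = ∑ x ∈ range (n + 1), q ^ x * (1 - q) ^ (n - x) * (n.choose x : ℝ) :=
        sum_congr rfl fun x _ => by ring
    _ = 1 := h.symm

lemma Edesc (n k : ℕ) (q : ℝ) :
    ∑ x ∈ range (n + 1), (n.choose x : ℝ) * q ^ x * (1 - q) ^ (n - x) * (x.descFactorial k : ℝ)
      = (n.descFactorial k : ℝ) * q ^ k := by
  rcases le_or_gt k n with h | h
  · rw [show range (n + 1) = Ico 0 (n + 1) by rw [range_eq_Ico],
      ← Finset.sum_Ico_consecutive _ (Nat.zero_le k) (by omega : k ≤ n + 1)]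
    have h0 : ∑ x ∈ Ico 0 k,
        (n.choose x : ℝ) * q ^ x * (1 - q) ^ (n - x) * (x.descFactorial k : ℝ) = 0 := by
      apply Finset.sum_eq_zero
      intro x hx
      rw [Nat.descFactorial_eq_zero_iff_lt.2 (mem_Ico.1 hx).2, Nat.cast_zero, mul_zero]
    rw [h0, zero_add, Finset.sum_Ico_eq_sum_range]
    have hnk : n + 1 - k = (n - k) + 1 := by omega
    rw [hnk, show ((n.descFactorial k : ℝ) * q ^ k : ℝ) = (n.descFactorial k : ℝ) * q ^ k *
        ∑ j ∈ range ((n - k) + 1), ((n - k).choose j : ℝ) * q ^ j * (1 - q) ^ ((n - k) - j)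
        from by rw [pmf_sum]; ring, Finset.mul_sum]
    apply sum_congr rfl
    intro j hj
    have hc : ((k + j).descFactorial k : ℝ) * (n.choose (k + j) : ℝ) =
        (n.descFactorial k : ℝ) * ((n - k).choose j : ℝ) := by
      exact_mod_cast congrArg (Nat.cast : ℕ → ℝ) (desc_mul_choose n k j)
    have he : n - (k + j) = (n - k) - j := by omega
    rw [he]
    linear_combination (q ^ k * q ^ j * (1 - q) ^ ((n - k) - j)) * hc
  · rw [Finset.sum_eq_zero, eq_comm, _root_.mul_eq_zero]
    · left
      exact_mod_cast congrArg (Nat.cast : ℕ → ℝ)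
        (Nat.descFactorial_eq_zero_iff_lt.2 h)
    · intro x hx
      have hx' : x < k := by have := mem_range.1 hx; omega
      rw [Nat.descFactorial_eq_zero_iff_lt.2 hx', Nat.cast_zero, mul_zero]

lemma Eprod (n k : ℕ) (q : ℝ) :
    binomialExpect n q (fun x => ∏ i ∈ range k, ((x : ℝ) - i)) =
      (∏ i ∈ range k, ((n : ℝ) - i)) * q ^ k := by
  rw [binomialExpect, ← cast_desc n k, ← Edesc n k q]
  exact sum_congr rfl fun x _ => by rw [← cast_desc x k]

lemma binomExpect_congr (n : ℕ) (q : ℝ) {f g : ℕ → ℝ} (h : ∀ x, f x = g x) :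
    binomialExpect n q f = binomialExpect n q g := by
  simp only [binomialExpect]
  exact sum_congr rfl fun x _ => by rw [h]

lemma expect_comb (n : ℕ) (q a b c d e : ℝ) :
    binomialExpect n q (fun x => a * (∏ i ∈ range 4, ((x : ℝ) - i))
        + b * (∏ i ∈ range 3, ((x : ℝ) - i)) + c * (∏ i ∈ range 2, ((x : ℝ) - i))
        + d * (∏ i ∈ range 1, ((x : ℝ) - i)) + e) =
      a * (∏ i ∈ range 4, ((n : ℝ) - i)) * q ^ 4 + b * (∏ i ∈ range 3, ((n : ℝ) - i)) * q ^ 3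
        + c * (∏ i ∈ range 2, ((n : ℝ) - i)) * q ^ 2
        + d * (∏ i ∈ range 1, ((n : ℝ) - i)) * q + e := by
  have key : binomialExpect n q (fun x => a * (∏ i ∈ range 4, ((x : ℝ) - i))
        + b * (∏ i ∈ range 3, ((x : ℝ) - i)) + c * (∏ i ∈ range 2, ((x : ℝ) - i))
        + d * (∏ i ∈ range 1, ((x : ℝ) - i)) + e) =
      a * binomialExpect n q (fun x => ∏ i ∈ range 4, ((x : ℝ) - i))
        + b * binomialExpect n q (fun x => ∏ i ∈ range 3, ((x : ℝ) - i))
        + c * binomialExpect n q (fun x => ∏ i ∈ range 2, ((x : ℝ) - i))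
        + d * binomialExpect n q (fun x => ∏ i ∈ range 1, ((x : ℝ) - i))
        + e * ∑ x ∈ range (n + 1), (n.choose x : ℝ) * q ^ x * (1 - q) ^ (n - x) := by
    simp only [binomialExpect]
    rw [Finset.mul_sum, Finset.mul_sum, Finset.mul_sum, Finset.mul_sum, Finset.mul_sum,
      ← Finset.sum_add_distrib, ← Finset.sum_add_distrib, ← Finset.sum_add_distrib,
      ← Finset.sum_add_distrib]
    exact sum_congr rfl fun x _ => by ring
  rw [key, Eprod, Eprod, Eprod, Eprod, pmf_sum]
  ring


/-- For `n ≥ 2`, `μ ∈ [-1, 1]` and `N ~ Binomial(n, (1 + μ)/2)`: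
`Var[(N - n/2)²] = n(n-1)/8 + (n(n-1)(n-2)/4) μ² - (n(n-1)(2n-3)/8) μ⁴`; in particular
`Var[(N - n/2)²] ≤ n(n-1)/8 + (n(n-1)(n-2)/4) μ²`. -/
theorem binomial_centered_square_variance (n : ℕ) (hn : 2 ≤ n) (μ : ℝ)
    (hμ : μ ∈ Set.Icc (-1 : ℝ) 1) :
    binomialVar n ((1 + μ) / 2) (fun x => ((x : ℝ) - n / 2) ^ 2) =
        n * ((n : ℝ) - 1) / 8 + (n * ((n : ℝ) - 1) * ((n : ℝ) - 2) / 4) * μ ^ 2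
          - (n * ((n : ℝ) - 1) * (2 * (n : ℝ) - 3) / 8) * μ ^ 4 ∧
    binomialVar n ((1 + μ) / 2) (fun x => ((x : ℝ) - n / 2) ^ 2) ≤
        n * ((n : ℝ) - 1) / 8 + (n * ((n : ℝ) - 1) * ((n : ℝ) - 2) / 4) * μ ^ 2 := by
  set q : ℝ := (1 + μ) / 2 with hq
  set c : ℝ := (n : ℝ) / 2 with hc
  have hA : binomialExpect n q (fun x => ((x : ℝ) - (n : ℝ) / 2) ^ 2) =
      0 * (∏ i ∈ range 4, ((n : ℝ) - i)) * q ^ 4 + 0 * (∏ i ∈ range 3, ((n : ℝ) - i)) * q ^ 3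
        + 1 * (∏ i ∈ range 2, ((n : ℝ) - i)) * q ^ 2
        + (1 - 2 * c) * (∏ i ∈ range 1, ((n : ℝ) - i)) * q + c ^ 2 := by
    rw [← expect_comb n q 0 0 1 (1 - 2 * c) (c ^ 2)]
    apply binomExpect_congr
    intro x
    simp only [prod_range_succ, prod_range_zero, hc]
    push_cast
    ring
  have hB : binomialExpect n q (fun x => (((x : ℝ) - (n : ℝ) / 2) ^ 2) ^ 2) =
      1 * (∏ i ∈ range 4, ((n : ℝ) - i)) * q ^ 4
        + (6 - 4 * c) * (∏ i ∈ range 3, ((n : ℝ) - i)) * q ^ 3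
        + (7 - 12 * c + 6 * c ^ 2) * (∏ i ∈ range 2, ((n : ℝ) - i)) * q ^ 2
        + (1 - 4 * c + 6 * c ^ 2 - 4 * c ^ 3) * (∏ i ∈ range 1, ((n : ℝ) - i)) * q
        + c ^ 4 := by
    rw [← expect_comb n q 1 (6 - 4 * c) (7 - 12 * c + 6 * c ^ 2)
      (1 - 4 * c + 6 * c ^ 2 - 4 * c ^ 3) (c ^ 4)]
    apply binomExpect_congr
    intro x
    simp only [prod_range_succ, prod_range_zero, hc]
    push_cast
    ring
  have heq : binomialVar n q (fun x => ((x : ℝ) - n / 2) ^ 2) =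
      n * ((n : ℝ) - 1) / 8 + (n * ((n : ℝ) - 1) * ((n : ℝ) - 2) / 4) * μ ^ 2
        - (n * ((n : ℝ) - 1) * (2 * (n : ℝ) - 3) / 8) * μ ^ 4 := by
    rw [binomialVar, hA, hB]
    simp only [prod_range_succ, prod_range_zero, hc, hq]
    push_cast
    ring
  refine ⟨heq, ?_⟩
  rw [heq]
  have h2 : (2 : ℝ) ≤ (n : ℝ) := by exact_mod_cast hn
  have h4 : (0 : ℝ) ≤ μ ^ 4 := by positivity
  have hcoef : (0 : ℝ) ≤ n * ((n : ℝ) - 1) * (2 * (n : ℝ) - 3) / 8 :=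
    div_nonneg (mul_nonneg (mul_nonneg (by linarith) (by linarith)) (by linarith)) (by norm_num)
  nlinarith [mul_nonneg hcoef h4]
end

section
/- Let k ≥ 2 and M ≥ 1 be integers with M < k, and let W be a k × M row-stochastic matrix (all entries nonnegative and each row sums to 1). Let u denote the uniform probability vector on [k], u_r = 1/k. Then there exists a probability vector p on [k] (nonnegative entries summing to 1) such that (1/2)·Σ_{r=1}^{k} |p_r − 1/k| = 1/k and Wᵀp = Wᵀu. -/
open Finset Matrix

/-- For `2 ≤ k`, `1 ≤ M < k` and a row-stochastic `k × M` matrix `W`, there exists a probability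
vector `p` on `[k]` at total variation distance exactly `1/k` from uniform such that
`Wᵀ p = Wᵀ u`. -/
theorem exists_indistinguishable_distribution (k M : ℕ) (hk : 2 ≤ k) (hM : 1 ≤ M) (hMk : M < k)
    (W : Matrix (Fin k) (Fin M) ℝ)
    (hW0 : ∀ x y, 0 ≤ W x y) (hW1 : ∀ x, ∑ y, W x y = 1) :
    ∃ p : Fin k → ℝ, (∀ r, 0 ≤ p r) ∧ (∑ r, p r = 1) ∧
      (1 / 2 : ℝ) * ∑ r, |p r - 1 / k| = 1 / k ∧
      Wᵀ.mulVec p = Wᵀ.mulVec (fun _ => (1 / k : ℝ)) := by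
  have hk0 : (0:ℝ) < (k:ℝ) := by positivity
  -- kernel of Wᵀ is nontrivial
  have hinj : ¬ Function.Injective (Wᵀ.mulVecLin) := by
    intro h
    have h2 := LinearMap.finrank_le_finrank_of_injective h
    simp [Module.finrank_fin_fun] at h2
    omega
  rw [Function.not_injective_iff] at hinj
  obtain ⟨a, b, hab, hne⟩ := hinj
  set v : Fin k → ℝ := a - b with hv
  have hv0 : Wᵀ.mulVec v = 0 := by
    have : Wᵀ.mulVecLin (a - b) = 0 := by
      rw [map_sub, hab, sub_self]
    simpa only [Matrix.mulVecLin_apply] using this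
  have hvne : v ≠ 0 := sub_ne_zero.mpr hne
  -- sum of v is zero
  have hsum : ∑ r, v r = 0 := by
    have h1 : ∑ y, Wᵀ.mulVec v y = 0 := by rw [hv0]; simp
    calc ∑ r, v r = ∑ r, v r * ∑ y, W r y := by
          simp [hW1]
      _ = ∑ y, ∑ r, v r * W r y := by
          simp_rw [Finset.mul_sum]
          exact Finset.sum_comm
      _ = ∑ y, Wᵀ.mulVec v y := by
          simp [Matrix.mulVec, dotProduct, Matrix.transpose_apply, mul_comm]
      _ = 0 := h1
  -- normalize
  set S : ℝ := ∑ r, |v r| with hS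
  have hSpos : 0 < S := by
    obtain ⟨r, hr⟩ : ∃ r, v r ≠ 0 := Function.ne_iff.mp hvne
    have : 0 < |v r| := abs_pos.mpr hr
    exact lt_of_lt_of_le this (Finset.single_le_sum (fun i _ => abs_nonneg (v i)) (Finset.mem_univ r))
  set c : ℝ := 2 / ((k:ℝ) * S) with hc
  have hcpos : 0 < c := by positivity
  set w : Fin k → ℝ := fun r => c * v r with hw
  have hwabs : ∑ r, |w r| = 2 / k := by
    have : ∑ r, |w r| = c * S := by
      simp only [hw, abs_mul, abs_of_pos hcpos, hS, Finset.mul_sum]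
    rw [this, hc]
    field_simp
  have hwsum : ∑ r, w r = 0 := by
    simp only [hw, ← Finset.mul_sum, hsum, mul_zero]
  -- each w r ≥ -1/k
  have hwlb : ∀ r, -(1 / (k:ℝ)) ≤ w r := by
    intro r
    have hterm : ∀ i, 0 ≤ |w i| - w i := fun i => by
      have := neg_abs_le (w i); linarith [le_abs_self (w i)]
    have hsum2 : ∑ i, (|w i| - w i) = 2 / k := by
      rw [Finset.sum_sub_distrib, hwabs, hwsum, sub_zero]
    have hle : |w r| - w r ≤ 2 / k := by
      rw [← hsum2]
      exact Finset.single_le_sum (fun i _ => hterm i) (Finset.mem_univ r)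
    have habs : -(w r) ≤ |w r| := neg_le_abs (w r)
    have h2k : (2:ℝ)/k = 2*(1/k) := by ring
    linarith
  refine ⟨fun r => 1 / k + w r, ?_, ?_, ?_, ?_⟩
  · intro r
    have := hwlb r
    linarith
  · rw [Finset.sum_add_distrib, hwsum, add_zero, Finset.sum_const]
    simp
    field_simp
  · simp only [add_sub_cancel_left]
    rw [hwabs]
    field_simp
  · have : (fun r => 1 / (k:ℝ) + w r) = (fun _ => (1 / k : ℝ)) + c • v := by
      funext r; simp [hw, Pi.add_apply, Pi.smul_apply, smul_eq_mul]
    rw [this, Matrix.mulVec_add, Matrix.mulVec_smul, hv0, smul_zero, add_zero]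
end
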